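/- arXiv:0712.3869 — 8 statements merged into one kernel-verified Lean document; each statement's English description precedes it below -/
import Mathlib

section
/- Let L be a lattice in which the lengths of all chains between any two fixed comparable elements are uniformly bounded. If L is semimodular or lower semimodular, then for any two elements a ≤ b of L, any two maximal chains between a and b are r-equivalent; in particular, all maximal chains between a and b have the same length. -/
/-- `c : Fin (k+1) → L` is a maximal chain of length `k` between `a` and `b`:
`a = c 0 ⋖ c 1 ⋖ ⋯ ⋖ c k = b`. -/
def IsMaximalChain {L : Type*} [Lattice L] (a b : L) (k : ℕ) (c : Fin (k + 1) → L) : Prop :=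
  c 0 = a ∧ c (Fin.last k) = b ∧ ∀ i : Fin k, c i.castSucc ⋖ c i.succ

/-- One elementary step of r-equivalence: both chains are maximal chains of length `k`
between `a` and `b`, and they differ in exactly one place. -/
def RStep {L : Type*} [Lattice L] (a b : L) (k : ℕ) (c d : Fin (k + 1) → L) : Prop :=
  IsMaximalChain a b k c ∧ IsMaximalChain a b k d ∧ (∃! i : Fin (k + 1), c i ≠ d i)

/-- Two maximal chains of length `k` between `a` and `b` are r-equivalent if one can pass
from the first to the second by a finite sequence of maximal chains between `a` and `b`,
each obtained from the previous one by replacing exactly one element. -/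
def REquiv {L : Type*} [Lattice L] (a b : L) (k : ℕ) (c d : Fin (k + 1) → L) : Prop :=
  Relation.ReflTransGen (RStep a b k) c d

/-- A lattice is semimodular if `a ⊓ b ⋖ a` and `a ⊓ b ⋖ b` imply
`a ⋖ a ⊔ b` and `b ⋖ a ⊔ b`. -/
def Semimodular (L : Type*) [Lattice L] : Prop :=
  ∀ x y : L, x ⊓ y ⋖ x → x ⊓ y ⋖ y → (x ⋖ x ⊔ y ∧ y ⋖ x ⊔ y)

/-- A lattice is lower semimodular if `a ⋖ a ⊔ b` and `b ⋖ a ⊔ b` imply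
`a ⊓ b ⋖ a` and `a ⊓ b ⋖ b`. -/
def LowerSemimodular (L : Type*) [Lattice L] : Prop :=
  ∀ x y : L, x ⋖ x ⊔ y → y ⋖ x ⊔ y → (x ⊓ y ⋖ x ∧ x ⊓ y ⋖ y)


/-! Semimodularity makes `L`, and lower semimodularity makes `Lᵒᵈ`, a weakly upper modular lattice;
reading chains backwards turns maximal chains and r-equivalences of `Lᵒᵈ` into those of `L`, so it
suffices to treat the weakly upper modular case. There one inducts on the length of `c`. If the
first steps `a ⋖ c₁` and `a ⋖ d₁` differ, then `c₁ ⊓ d₁ = a`, so `c₁ ⊔ d₁` covers both `c₁` and `d₁`,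
and (by the same argument applied to the tail of `c`) there is a maximal chain `g` from `c₁ ⊔ d₁`
to `b`. The chains `a ⋖ c₁ ⋖ g` and `a ⋖ d₁ ⋖ g` differ in exactly one element, and the induction
hypothesis links the first to `c` and the second to `d`; the same diagram shows that `c` and `d`
have equal length. -/

open OrderDual

section Lattice

variable {L : Type*} [Lattice L]

theorem Semimodular.isWeakUpperModularLattice (h : Semimodular L) :
    IsWeakUpperModularLattice L :=
  ⟨fun ha hb => (h _ _ ha hb).1⟩

theorem LowerSemimodular.isWeakLowerModularLattice (h : LowerSemimodular L) :
    IsWeakLowerModularLattice L :=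
  ⟨fun ha hb => (h _ _ ha hb).1⟩

theorem sup_covBy_of_covBy_of_covBy [IsWeakUpperModularLattice L] {a x y : L}
    (hx : a ⋖ x) (hy : a ⋖ y) (hxy : x ≠ y) : x ⋖ x ⊔ y ∧ y ⋖ x ⊔ y := by
  have hinf : x ⊓ y = a := hx.wcovBy.inf_eq hy.wcovBy hxy
  exact ⟨covBy_sup_of_inf_covBy_of_inf_covBy_left (hinf ▸ hx) (hinf ▸ hy),
    covBy_sup_of_inf_covBy_of_inf_covBy_right (hinf ▸ hx) (hinf ▸ hy)⟩

namespace IsMaximalChain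

variable {a b z : L} {k : ℕ}

theorem monotone {c : Fin (k + 1) → L} (hc : IsMaximalChain a b k c) : Monotone c :=
  (Fin.strictMono_iff_lt_succ.2 fun i => (hc.2.2 i).lt).monotone

theorem le_right {c : Fin (k + 1) → L} (hc : IsMaximalChain a b k c) (i : Fin (k + 1)) :
    c i ≤ b :=
  hc.2.1 ▸ hc.monotone (Fin.le_last i)

theorem left_eq_right {c : Fin 1 → L} (hc : IsMaximalChain a b 0 c) : a = b :=
  hc.1.symm.trans hc.2.1

theorem covBy_one {c : Fin (k + 2) → L} (hc : IsMaximalChain a b (k + 1) c) : a ⋖ c 1 :=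
  hc.1 ▸ hc.2.2 0

theorem left_lt_right {c : Fin (k + 2) → L} (hc : IsMaximalChain a b (k + 1) c) : a < b :=
  hc.covBy_one.lt.trans_le (hc.le_right 1)

theorem tail {c : Fin (k + 2) → L} (hc : IsMaximalChain a b (k + 1) c) :
    IsMaximalChain (c 1) b k (Fin.tail c) :=
  ⟨rfl, hc.2.1, fun i => hc.2.2 i.succ⟩

theorem cons {g : Fin (k + 1) → L} (haz : a ⋖ z) (hg : IsMaximalChain z b k g) :
    IsMaximalChain a b (k + 1) (Fin.cons a g) := by
  refine ⟨rfl, hg.2.1, fun i => ?_⟩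
  cases i using Fin.cases with
  | zero => simpa [hg.1] using haz
  | succ j => simpa [← Fin.succ_castSucc] using hg.2.2 j

theorem cons_tail {c : Fin (k + 2) → L} (hc : IsMaximalChain a b (k + 1) c) :
    Fin.cons a (Fin.tail c) = c :=
  hc.1 ▸ Fin.cons_self_tail c

theorem dual {c : Fin (k + 1) → L} (hc : IsMaximalChain a b k c) :
    IsMaximalChain (toDual b) (toDual a) k (toDual ∘ c ∘ Fin.rev) := by
  refine ⟨by simp [hc.2.1], by simp [hc.1], fun i => ?_⟩
  simpa [Fin.rev_castSucc, Fin.rev_succ] using (hc.2.2 i.rev).toDual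

variable [IsWeakUpperModularLattice L]

theorem exists_of_covBy {n : ℕ} {x : L} {c : Fin (n + 1) → L} (hc : IsMaximalChain x b n c)
    (hxz : x ⋖ z) (hzb : z ≤ b) : ∃ (j : ℕ) (e : Fin (j + 1) → L), IsMaximalChain z b j e := by
  induction n generalizing x z with
  | zero => exact absurd (hxz.lt.trans_le hzb) (hc.left_eq_right ▸ lt_irrefl x)
  | succ n ih =>
    by_cases hz : z = c 1
    · exact ⟨n, _, hz ▸ hc.tail⟩
    obtain ⟨hz_sup, hc_sup⟩ := sup_covBy_of_covBy_of_covBy hxz hc.covBy_one hz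
    obtain ⟨j, e, he⟩ := ih hc.tail hc_sup (sup_le hzb (hc.le_right 1))
    exact ⟨j + 1, _, cons (he.1 ▸ hz_sup) he⟩

theorem exists_common_tail {m : ℕ} {c : Fin (k + 2) → L} {d : Fin (m + 2) → L}
    (hc : IsMaximalChain a b (k + 1) c) (hd : IsMaximalChain a b (m + 1) d) (hcd : c 1 ≠ d 1) :
    ∃ (j : ℕ) (g : Fin (j + 1) → L), IsMaximalChain (c 1) b (j + 1) (Fin.cons (c 1) g) ∧
      IsMaximalChain (d 1) b (j + 1) (Fin.cons (d 1) g) := by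
  obtain ⟨hc_sup, hd_sup⟩ := sup_covBy_of_covBy_of_covBy hc.covBy_one hd.covBy_one hcd
  obtain ⟨j, g, hg⟩ := hc.tail.exists_of_covBy hc_sup (sup_le (hc.le_right 1) (hd.le_right 1))
  exact ⟨j, g, cons (hg.1 ▸ hc_sup) hg, cons (hg.1 ▸ hd_sup) hg⟩

theorem length_eq {m : ℕ} {c : Fin (k + 1) → L} {d : Fin (m + 1) → L}
    (hc : IsMaximalChain a b k c) (hd : IsMaximalChain a b m d) : k = m := by
  induction k generalizing a m d with
  | zero =>
    cases m with
    | zero => rfl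
    | succ m => exact absurd hd.left_lt_right (hc.left_eq_right ▸ lt_irrefl a)
  | succ k ih =>
    cases m with
    | zero => exact absurd hc.left_lt_right (hd.left_eq_right ▸ lt_irrefl a)
    | succ m =>
      by_cases hcd : c 1 = d 1
      · exact congrArg (· + 1) (ih hc.tail (hcd ▸ hd.tail))
      obtain ⟨j, g, hcg, hdg⟩ := hc.exists_common_tail hd hcd
      obtain rfl : k = j + 1 := ih hc.tail hcg
      exact congrArg (· + 1) (ih hdg hd.tail)

end IsMaximalChain

namespace RStep

variable {a b z : L} {k : ℕ}

theorem symm {c d : Fin (k + 1) → L} (h : RStep a b k c d) : RStep a b k d c := by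
  obtain ⟨hc, hd, i, hi, huniq⟩ := h
  exact ⟨hd, hc, i, Ne.symm hi, fun j hj => huniq j (Ne.symm hj)⟩

theorem cons {g h : Fin (k + 1) → L} (haz : a ⋖ z) (hgh : RStep z b k g h) :
    RStep a b (k + 1) (Fin.cons a g) (Fin.cons a h) := by
  obtain ⟨hg, hh, i, hi, huniq⟩ := hgh
  refine ⟨IsMaximalChain.cons (hg.1 ▸ haz) hg, IsMaximalChain.cons (hh.1 ▸ haz) hh, i.succ, by simpa using hi, fun j hj => ?_⟩
  cases j using Fin.cases with
  | zero => exact absurd rfl hj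
  | succ j => exact congrArg Fin.succ (huniq j (by simpa using hj))

theorem cons_cons_of_ne {x y : L} {g : Fin (k + 1) → L}
    (hx : IsMaximalChain a b (k + 2) (Fin.cons a (Fin.cons x g)))
    (hy : IsMaximalChain a b (k + 2) (Fin.cons a (Fin.cons y g))) (hxy : x ≠ y) :
    RStep a b (k + 2) (Fin.cons a (Fin.cons x g)) (Fin.cons a (Fin.cons y g)) := by
  refine ⟨hx, hy, 1, hxy, fun i hi => ?_⟩
  cases i using Fin.cases with
  | zero => exact absurd rfl hi
  | succ i =>
    cases i using Fin.cases with
    | zero => rfl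
    | succ i => exact absurd (by simp) hi

theorem of_dual {c d : Fin (k + 1) → Lᵒᵈ} (h : RStep (toDual b) (toDual a) k c d) :
    RStep a b k (ofDual ∘ c ∘ Fin.rev) (ofDual ∘ d ∘ Fin.rev) := by
  obtain ⟨hc, hd, i, hi, huniq⟩ := h
  -- `IsMaximalChain.dual` in `Lᵒᵈ` lands in `Lᵒᵈᵒᵈ`, which is `L` by definition.
  refine ⟨hc.dual, hd.dual, i.rev, by simpa using hi, fun j hj => ?_⟩
  rw [← huniq j.rev (by simpa using hj), Fin.rev_rev]

end RStep

namespace REquiv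

variable {a b z : L} {k : ℕ}

theorem symm {c d : Fin (k + 1) → L} (h : REquiv a b k c d) : REquiv a b k d c :=
  Relation.ReflTransGen.mono (fun _ _ => RStep.symm) _ _ (Relation.ReflTransGen.swap _ _ h)

theorem cons {g h : Fin (k + 1) → L} (haz : a ⋖ z) (hgh : REquiv z b k g h) :
    REquiv a b (k + 1) (Fin.cons a g) (Fin.cons a h) :=
  Relation.ReflTransGen.lift (p := RStep a b (k + 1)) (fun e : Fin (k + 1) → L => Fin.cons a e)
    (fun _ _ => RStep.cons haz) _ _ hgh

theorem of_tail {c d : Fin (k + 2) → L} (hc : IsMaximalChain a b (k + 1) c)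
    (hd : IsMaximalChain a b (k + 1) d) (h : REquiv (c 1) b k (Fin.tail c) (Fin.tail d)) :
    REquiv a b (k + 1) c d := by
  simpa only [hc.cons_tail, hd.cons_tail] using h.cons hc.covBy_one

theorem of_dual {c d : Fin (k + 1) → L}
    (h : REquiv (toDual b) (toDual a) k (toDual ∘ c ∘ Fin.rev) (toDual ∘ d ∘ Fin.rev)) :
    REquiv a b k c d := by
  have h' : REquiv a b k (ofDual ∘ (toDual ∘ c ∘ Fin.rev) ∘ Fin.rev)
      (ofDual ∘ (toDual ∘ d ∘ Fin.rev) ∘ Fin.rev) :=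
    Relation.ReflTransGen.lift (p := RStep a b k) (fun e => ofDual ∘ e ∘ Fin.rev)
      (fun _ _ => RStep.of_dual) _ _ h
  simpa [Function.comp_def] using h'

end REquiv

theorem IsMaximalChain.rEquiv [IsWeakUpperModularLattice L] {a b : L} {k : ℕ}
    {c d : Fin (k + 1) → L} (hc : IsMaximalChain a b k c) (hd : IsMaximalChain a b k d) :
    REquiv a b k c d := by
  induction k generalizing a with
  | zero =>
    obtain rfl : c = d := funext fun i => by rw [Fin.fin_one_eq_zero i, hc.1, hd.1]
    exact .refl
  | succ k ih =>
    by_cases hcd : c 1 = d 1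
    · exact .of_tail hc hd (ih hc.tail (hcd ▸ hd.tail))
    obtain ⟨j, g, hcg, hdg⟩ := hc.exists_common_tail hd hcd
    obtain rfl : k = j + 1 := hc.tail.length_eq hcg
    have hc_g : REquiv a b (j + 2) c (Fin.cons a (Fin.cons (c 1) g)) :=
      .of_tail hc (hcg.cons hc.covBy_one) (ih hc.tail hcg)
    have hd_g : REquiv a b (j + 2) d (Fin.cons a (Fin.cons (d 1) g)) :=
      .of_tail hd (hdg.cons hd.covBy_one) (ih hd.tail hdg)
    exact (hc_g.tail (.cons_cons_of_ne (hcg.cons hc.covBy_one) (hdg.cons hd.covBy_one) hcd)).trans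
      hd_g.symm

end Lattice

/-- In a lattice in which the lengths of all maximal chains between any two
fixed comparable elements are uniformly bounded, if the lattice is semimodular or lower
semimodular, then any two maximal chains between `a` and `b` are r-equivalent; in particular,
they have the same length. -/
theorem maximal_chains_r_equivalent {L : Type*} [Lattice L]
    (hmod : Semimodular L ∨ LowerSemimodular L)
    (a b : L) (k m : ℕ) (c : Fin (k + 1) → L) (d : Fin (m + 1) → L)
    (hc : IsMaximalChain a b k c) (hd : IsMaximalChain a b m d) :
    ∃ hkm : k = m, REquiv a b m (fun i => c (Fin.cast (by rw [hkm]) i)) d := by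
  rcases hmod with hsm | hlsm
  · have := hsm.isWeakUpperModularLattice
    obtain rfl := hc.length_eq hd
    exact ⟨rfl, hc.rEquiv hd⟩
  · have := hlsm.isWeakLowerModularLattice
    obtain rfl := hc.dual.length_eq hd.dual
    exact ⟨rfl, .of_dual (hc.dual.rEquiv hd.dual)⟩
end

section
/- Let G ≤ Sₙ be a permutation group containing a transitive cyclic subgroup Cₙ (equivalently, containing an n-cycle), and let G₁ be the stabilizer of a point. Then the lattice L(G₁,G) is modular, and moreover there is an injective map from L(G₁,G) into the set of positive divisors of n ordered by divisibility which preserves the order, meets and joins (so L(G₁,G) is isomorphic to a sublattice of the divisor lattice Lₙ). -/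
private lemma natN1 {a b z : ℕ} (ha : 0 < a) (hb : 0 < b) (hz : 0 < z)
    (haz : a ∣ z) (hzl : z ∣ Nat.lcm a b) : Nat.lcm (Nat.gcd z b) a = z := by
  have hg : 0 < Nat.gcd z b := Nat.gcd_pos_of_pos_left b hz
  have hL : 0 < Nat.lcm (Nat.gcd z b) a := Nat.lcm_pos hg ha
  refine Nat.dvd_antisymm (Nat.lcm_dvd (Nat.gcd_dvd_left z b) haz) ?_
  rw [← Nat.factorization_le_iff_dvd hz.ne' hL.ne', Nat.factorization_lcm hg.ne' ha.ne',
    Nat.factorization_gcd hz.ne' hb.ne']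
  intro p
  have h1 : a.factorization p ≤ z.factorization p :=
    (Nat.factorization_le_iff_dvd ha.ne' hz.ne').mpr haz p
  have h2 : z.factorization p ≤ (Nat.lcm a b).factorization p :=
    (Nat.factorization_le_iff_dvd hz.ne' (Nat.lcm_pos ha hb).ne').mpr hzl p
  rw [Nat.factorization_lcm ha.ne' hb.ne'] at h2
  simp only [Finsupp.sup_apply, Finsupp.inf_apply] at *
  omega

private lemma natN2 {a b w : ℕ} (ha : 0 < a) (hb : 0 < b) (hw : 0 < w)
    (hgw : Nat.gcd a b ∣ w) (hwb : w ∣ b) : Nat.gcd (Nat.lcm w a) b = w := by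
  have hL : 0 < Nat.lcm w a := Nat.lcm_pos hw ha
  have hg : 0 < Nat.gcd (Nat.lcm w a) b := Nat.gcd_pos_of_pos_right _ hb
  refine Nat.dvd_antisymm ?_ (Nat.dvd_gcd (Nat.dvd_lcm_left w a) hwb)
  rw [← Nat.factorization_le_iff_dvd hg.ne' hw.ne', Nat.factorization_gcd hL.ne' hb.ne',
    Nat.factorization_lcm hw.ne' ha.ne']
  intro p
  have h1 : (Nat.gcd a b).factorization p ≤ w.factorization p :=
    (Nat.factorization_le_iff_dvd (Nat.gcd_pos_of_pos_left b ha).ne' hw.ne').mpr hgw p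
  have h2 : w.factorization p ≤ b.factorization p :=
    (Nat.factorization_le_iff_dvd hw.ne' hb.ne').mpr hwb p
  rw [Nat.factorization_gcd ha.ne' hb.ne'] at h1
  simp only [Finsupp.sup_apply, Finsupp.inf_apply] at *
  omega

section CyclicAux

variable {G : Type*} [Group G] [Finite G] {g : G}

private lemma LMcard_pos (A : Subgroup G) : 0 < Nat.card A := Nat.card_pos

private lemma LMorder_pos (g : G) : 0 < orderOf g := by
  rw [← Nat.card_zpowers]; exact Nat.card_pos

private lemma LMcard_dvd {A : Subgroup G} (hA : A ≤ Subgroup.zpowers g) :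
    Nat.card A ∣ orderOf g := by
  rw [← Nat.card_zpowers]; exact Subgroup.card_dvd_of_le hA

private lemma LMcard_E {b : ℕ} (hb : b ∣ orderOf g) (hb0 : 0 < b) :
    Nat.card (Subgroup.zpowers (g ^ (orderOf g / b))) = b := by
  rw [Nat.card_zpowers, orderOf_pow, Nat.gcd_eq_right (Nat.div_dvd_of_dvd hb),
    Nat.div_div_self hb (LMorder_pos g).ne']

private lemma LME_le (b : ℕ) : Subgroup.zpowers (g ^ (orderOf g / b)) ≤ Subgroup.zpowers g :=
  Subgroup.zpowers_le.mpr (pow_mem (Subgroup.mem_zpowers g) _)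

private lemma LME_le_E {b b' : ℕ} (h : b ∣ b') (h' : b' ∣ orderOf g) (hb0 : 0 < b) :
    Subgroup.zpowers (g ^ (orderOf g / b)) ≤ Subgroup.zpowers (g ^ (orderOf g / b')) := by
  rw [Subgroup.zpowers_le]
  obtain ⟨c, rfl⟩ := h
  obtain ⟨d, hd⟩ := h'
  have hbc : 0 < b * c := by
    rcases Nat.eq_zero_or_pos (b * c) with h0 | h
    · exfalso
      have hpos := LMorder_pos g
      rw [hd, h0, zero_mul] at hpos
      exact lt_irrefl 0 hpos
    · exact h
  have e1 : orderOf g / b = c * d := by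
    rw [hd, mul_assoc, Nat.mul_div_cancel_left _ hb0]
  have e2 : orderOf g / (b * c) = d := by rw [hd, Nat.mul_div_cancel_left _ hbc]
  have h1 : orderOf g / b = orderOf g / (b * c) * c := by rw [e1, e2, mul_comm]
  rw [h1, pow_mul]
  exact pow_mem (Subgroup.mem_zpowers _) c

private lemma LMeq_E {B : Subgroup G} (hB : B ≤ Subgroup.zpowers g) :
    B = Subgroup.zpowers (g ^ (orderOf g / Nat.card B)) := by
  have hdvd : Nat.card B ∣ orderOf g := LMcard_dvd hB
  have hle : B ≤ Subgroup.zpowers (g ^ (orderOf g / Nat.card B)) := by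
    intro x hx
    obtain ⟨k, hk⟩ := Subgroup.mem_zpowers_iff.mp (hB hx)
    have hxb : x ^ Nat.card B = 1 :=
      orderOf_dvd_iff_pow_eq_one.mp (B.orderOf_dvd_natCard hx)
    have hzb : g ^ (k * (Nat.card B : ℤ)) = 1 := by
      rw [zpow_mul, hk, zpow_natCast, hxb]
    have hdvd2 : ((orderOf g : ℤ)) ∣ k * (Nat.card B : ℤ) :=
      orderOf_dvd_iff_zpow_eq_one.mpr hzb
    have hdvd3 : ((orderOf g / Nat.card B : ℕ) : ℤ) ∣ k := by
      obtain ⟨t, ht⟩ := hdvd2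
      obtain ⟨u, hu⟩ := hdvd
      have hBpos : 0 < Nat.card B := LMcard_pos B
      have hu' : orderOf g / Nat.card B = u := by
        rw [hu, Nat.mul_div_cancel_left _ hBpos]
      refine ⟨t, ?_⟩
      have : k * (Nat.card B : ℤ) = (u : ℤ) * t * (Nat.card B : ℤ) := by
        rw [ht, hu]; push_cast; ring
      have hk2 : k = (u : ℤ) * t := by
        have hbne : ((Nat.card B : ℤ)) ≠ 0 := by exact_mod_cast hBpos.ne'
        exact mul_right_cancel₀ hbne this
      rw [hk2, hu']
    obtain ⟨t, ht⟩ := hdvd3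
    refine Subgroup.mem_zpowers_iff.mpr ⟨t, ?_⟩
    rw [← zpow_natCast g (orderOf g / Nat.card B), ← zpow_mul, ← ht, hk]
  refine Subgroup.eq_of_le_of_card_ge hle ?_
  rw [LMcard_E hdvd (LMcard_pos B)]

private lemma LMle_iff {A B : Subgroup G} (hA : A ≤ Subgroup.zpowers g)
    (hB : B ≤ Subgroup.zpowers g) : A ≤ B ↔ Nat.card A ∣ Nat.card B := by
  refine ⟨Subgroup.card_dvd_of_le, fun h => ?_⟩
  have := LME_le_E (g := g) h (LMcard_dvd hB) (LMcard_pos A)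
  rwa [← LMeq_E hA, ← LMeq_E hB] at this

private lemma LMcard_inf {A B : Subgroup G} (hA : A ≤ Subgroup.zpowers g)
    (hB : B ≤ Subgroup.zpowers g) :
    Nat.card (A ⊓ B : Subgroup G) = Nat.gcd (Nat.card A) (Nat.card B) := by
  have hgdvd : Nat.gcd (Nat.card A) (Nat.card B) ∣ orderOf g :=
    (Nat.gcd_dvd_left _ _).trans (LMcard_dvd hA)
  have hgpos : 0 < Nat.gcd (Nat.card A) (Nat.card B) :=
    Nat.gcd_pos_of_pos_left _ (LMcard_pos A)
  set E := Subgroup.zpowers (g ^ (orderOf g / Nat.gcd (Nat.card A) (Nat.card B))) with hE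
  have hEcard : Nat.card E = Nat.gcd (Nat.card A) (Nat.card B) := LMcard_E hgdvd hgpos
  have hEA : E ≤ A := by
    rw [LMle_iff (LME_le _) hA, hEcard]; exact Nat.gcd_dvd_left _ _
  have hEB : E ≤ B := by
    rw [LMle_iff (LME_le _) hB, hEcard]; exact Nat.gcd_dvd_right _ _
  refine Nat.dvd_antisymm
    (Nat.dvd_gcd (Subgroup.card_dvd_of_le inf_le_left) (Subgroup.card_dvd_of_le inf_le_right)) ?_
  rw [← hEcard]
  exact Subgroup.card_dvd_of_le (le_inf hEA hEB)

private lemma LMcard_sup {A B : Subgroup G} (hA : A ≤ Subgroup.zpowers g)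
    (hB : B ≤ Subgroup.zpowers g) :
    Nat.card (A ⊔ B : Subgroup G) = Nat.lcm (Nat.card A) (Nat.card B) := by
  have hldvd : Nat.lcm (Nat.card A) (Nat.card B) ∣ orderOf g :=
    Nat.lcm_dvd (LMcard_dvd hA) (LMcard_dvd hB)
  have hlpos : 0 < Nat.lcm (Nat.card A) (Nat.card B) :=
    Nat.lcm_pos (LMcard_pos A) (LMcard_pos B)
  set E := Subgroup.zpowers (g ^ (orderOf g / Nat.lcm (Nat.card A) (Nat.card B))) with hE
  have hEcard : Nat.card E = Nat.lcm (Nat.card A) (Nat.card B) := LMcard_E hldvd hlpos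
  have hAE : A ≤ E := by
    rw [LMle_iff hA (LME_le _), hEcard]; exact Nat.dvd_lcm_left _ _
  have hBE : B ≤ E := by
    rw [LMle_iff hB (LME_le _), hEcard]; exact Nat.dvd_lcm_right _ _
  refine Nat.dvd_antisymm ?_
    (Nat.lcm_dvd (Subgroup.card_dvd_of_le le_sup_left) (Subgroup.card_dvd_of_le le_sup_right))
  rw [← hEcard]
  exact Subgroup.card_dvd_of_le (sup_le hAE hBE)

end CyclicAux

/-- Let `G` act faithfully and transitively on a finite set `Ω` of
cardinality `n` (so `G` is a transitive subgroup of `Sₙ`), and suppose `G` contains an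
element `g` whose cyclic subgroup `⟨g⟩` acts transitively on `Ω`. Let `G₁ = G_ω` be a
point stabilizer. Then the interval lattice `L(G₁, G)` is modular, and there is an
injective map from `L(G₁, G)` into the positive divisors of `n` which preserves the
order, meets (gcd) and joins (lcm); i.e. `L(G₁, G)` is isomorphic to a sublattice of the
divisor lattice `Lₙ`. -/
theorem lattice_modular_of_transitive_cyclic {G Ω : Type*} [Group G] [Fintype Ω]
    [MulAction G Ω] [FaithfulSMul G Ω] (htrans : MulAction.IsPretransitive G Ω)
    (n : ℕ) (hn : Fintype.card Ω = n)
    (g : G) (hcyc : MulAction.IsPretransitive (Subgroup.zpowers g) Ω)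
    (ω : Ω) :
    (∀ X Y : Subgroup G, MulAction.stabilizer G ω ≤ X → MulAction.stabilizer G ω ≤ Y →
      ((X ⊓ Y ⋖ X ∧ X ⊓ Y ⋖ Y) ↔ (X ⋖ X ⊔ Y ∧ Y ⋖ X ⊔ Y))) ∧
    ∃ f : {X : Subgroup G // MulAction.stabilizer G ω ≤ X} → {d : ℕ // 0 < d ∧ d ∣ n},
      Function.Injective f ∧
      (∀ X Y : {X : Subgroup G // MulAction.stabilizer G ω ≤ X},
        (X.1 ≤ Y.1 ↔ (f X).1 ∣ (f Y).1)) ∧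
      (∀ X Y : {X : Subgroup G // MulAction.stabilizer G ω ≤ X},
        (f ⟨X.1 ⊓ Y.1, le_inf X.2 Y.2⟩).1 = Nat.gcd (f X).1 (f Y).1) ∧
      (∀ X Y : {X : Subgroup G // MulAction.stabilizer G ω ≤ X},
        (f ⟨X.1 ⊔ Y.1, X.2.trans le_sup_left⟩).1 = Nat.lcm (f X).1 (f Y).1) := by
  classical
  haveI : Finite G := Finite.of_injective (fun x : G => (x • · : Ω → Ω))
    (fun a b h => eq_of_smul_eq_smul (congrFun h))
  set S := MulAction.stabilizer G ω with hS
  set C := Subgroup.zpowers g with hC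
  -- elements of C commute
  have hcomC : ∀ x ∈ C, ∀ y ∈ C, x * y = y * x := by
    intro x hx y hy
    obtain ⟨i, hi⟩ := Subgroup.mem_zpowers_iff.mp hx
    obtain ⟨j, hj⟩ := Subgroup.mem_zpowers_iff.mp hy
    rw [← hi, ← hj, ← zpow_add, ← zpow_add, add_comm]
  -- regularity
  have hreg : ∀ c ∈ C, c • ω = ω → c = 1 := by
    intro c hcC hcω
    refine eq_of_smul_eq_smul (α := Ω) fun p => ?_
    obtain ⟨d, hd⟩ := hcyc.exists_smul_eq ω p
    have hd' : (d : G) • ω = p := hd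
    rw [one_smul, ← hd', ← mul_smul, hcomC c hcC (d : G) d.2, mul_smul, hcω]
  have hCS : ∀ c ∈ C, c ∈ S → c = 1 := fun c hc hs => hreg c hc hs
  -- the cyclic group is regular, so its order is n
  have hcard : Nat.card C = n := by
    have hinj : Function.Injective (fun c : C => (c : G) • ω) := by
      intro c d h
      have h' : (c : G) • ω = (d : G) • ω := h
      have : ((d : G)⁻¹ * (c : G)) • ω = ω := by
        rw [mul_smul, h', ← mul_smul, inv_mul_cancel, one_smul]
      have h1 : (d : G)⁻¹ * (c : G) = 1 := hreg _ (mul_mem (inv_mem d.2) c.2) this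
      have : (c : G) = (d : G) := by
        have := congrArg (fun t => (d : G) * t) h1
        simpa [mul_assoc] using this
      exact Subtype.ext this
    have hsurj : Function.Surjective (fun c : C => (c : G) • ω) := by
      intro p
      obtain ⟨c, hc⟩ := hcyc.exists_smul_eq ω p
      exact ⟨c, hc⟩
    have e : C ≃ Ω := Equiv.ofBijective _ ⟨hinj, hsurj⟩
    rw [Nat.card_congr e, Nat.card_eq_fintype_card, hn]
  have hm : orderOf g = n := by rw [← Nat.card_zpowers, ← hC, hcard]
  have hnpos : 0 < n := by
    rw [← hn]; exact Fintype.card_pos_iff.mpr ⟨ω⟩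
  -- decomposition
  have hdecomp : ∀ X : Subgroup G, S ≤ X → ∀ x ∈ X, ∃ c ∈ X ⊓ C, c⁻¹ * x ∈ S := by
    intro X hX x hx
    obtain ⟨c, hc⟩ := hcyc.exists_smul_eq ω (x • ω)
    have hc' : (c : G) • ω = x • ω := hc
    have hcs : (c : G)⁻¹ * x ∈ S := by
      rw [hS, MulAction.mem_stabilizer_iff, mul_smul, ← hc', ← mul_smul, inv_mul_cancel, one_smul]
    have hcX : (c : G) ∈ X := by
      have hform : (c : G) = x * ((c : G)⁻¹ * x)⁻¹ := by group
      rw [hform]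
      exact mul_mem hx (inv_mem (hX hcs))
    exact ⟨c, Subgroup.mem_inf.mpr ⟨hcX, c.2⟩, hcs⟩
  -- order characterization
  have hle_iff : ∀ X Y : Subgroup G, S ≤ X → S ≤ Y → (X ≤ Y ↔ X ⊓ C ≤ Y ⊓ C) := by
    intro X Y hX hY
    refine ⟨fun h => inf_le_inf_right C h, fun h x hx => ?_⟩
    obtain ⟨c, hc, hs⟩ := hdecomp X hX x hx
    have hxeq : x = c * (c⁻¹ * x) := by group
    rw [hxeq]
    exact mul_mem (Subgroup.mem_inf.mp (h hc)).1 (hY hs)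
  -- sup decomposition
  have hsupC : ∀ X Y : Subgroup G, S ≤ X → S ≤ Y → (X ⊔ Y) ⊓ C = (X ⊓ C) ⊔ (Y ⊓ C) := by
    intro X Y hX hY
    refine le_antisymm ?_ (le_inf
      (sup_le (inf_le_left.trans le_sup_left) (inf_le_left.trans le_sup_right))
      (sup_le inf_le_right inf_le_right))
    have hmove : ∀ (Z : Subgroup G), S ≤ Z → ∀ s ∈ S, ∀ c ∈ Z ⊓ C,
        ∃ c' ∈ Z ⊓ C, ∃ s' ∈ S, s * c = c' * s' := by
      intro Z hZ s hs c hc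
      obtain ⟨c', hc', hs'⟩ := hdecomp Z hZ (s * c) (mul_mem (hZ hs) (Subgroup.mem_inf.mp hc).1)
      exact ⟨c', hc', c'⁻¹ * (s * c), hs', by group⟩
    set K : Subgroup G :=
      { carrier := {x | ∃ a ∈ X ⊓ C, ∃ b ∈ Y ⊓ C, ∃ s ∈ S, a * b * s = x}
        one_mem' := ⟨1, one_mem _, 1, one_mem _, 1, one_mem _, by group⟩
        mul_mem' := by
          rintro x y ⟨a, ha, b, hb, s, hs, rfl⟩ ⟨a', ha', b', hb', s', hs', rfl⟩
          obtain ⟨a₂, ha₂, s₂, hs₂, h1⟩ := hmove X hX s hs a' ha'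
          obtain ⟨b₂, hb₂, s₃, hs₃, h2⟩ := hmove Y hY s₂ hs₂ b' hb'
          refine ⟨a * a₂, mul_mem ha (?memA) , b * b₂, mul_mem hb (?memB), s₃ * s',
            mul_mem hs₃ hs', ?_⟩
          case memA => exact ha₂
          case memB => exact hb₂
          have hba : b * a₂ = a₂ * b :=
            hcomC b (Subgroup.mem_inf.mp hb).2 a₂ (Subgroup.mem_inf.mp ha₂).2
          calc a * a₂ * (b * b₂) * (s₃ * s')
              = a * (a₂ * b) * (b₂ * s₃) * s' := by group
            _ = a * b * (a₂ * s₂) * (b' * s') := by rw [← hba, ← h2]; group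
            _ = a * b * s * (a' * b' * s') := by rw [← h1]; group
        inv_mem' := by
          rintro x ⟨a, ha, b, hb, s, hs, rfl⟩
          obtain ⟨a₂, ha₂, s₂, hs₂, h1⟩ := hmove X hX s⁻¹ (inv_mem hs) a⁻¹ (inv_mem ha)
          obtain ⟨b₂, hb₂, s₃, hs₃, h2⟩ := hmove Y hY s₂ hs₂ b⁻¹ (inv_mem hb)
          refine ⟨a₂, ha₂, b₂, hb₂, s₃, hs₃, ?_⟩
          have hab : a⁻¹ * b⁻¹ = b⁻¹ * a⁻¹ :=
            hcomC _ (inv_mem (Subgroup.mem_inf.mp ha).2) _ (inv_mem (Subgroup.mem_inf.mp hb).2)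
          calc a₂ * b₂ * s₃
              = a₂ * (b₂ * s₃) := by group
            _ = a₂ * (s₂ * b⁻¹) := by rw [h2]
            _ = (a₂ * s₂) * b⁻¹ := by group
            _ = (s⁻¹ * a⁻¹) * b⁻¹ := by rw [h1]
            _ = s⁻¹ * (a⁻¹ * b⁻¹) := by group
            _ = s⁻¹ * (b⁻¹ * a⁻¹) := by rw [hab]
            _ = (a * b * s)⁻¹ := by group } with hK
    have hXK : X ≤ K := by
      intro z hz
      obtain ⟨c, hc, hcs⟩ := hdecomp X hX z hz
      exact ⟨c, hc, 1, one_mem _, c⁻¹ * z, hcs, by group⟩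
    have hYK : Y ≤ K := by
      intro z hz
      obtain ⟨c, hc, hcs⟩ := hdecomp Y hY z hz
      exact ⟨1, one_mem _, c, hc, c⁻¹ * z, hcs, by group⟩
    intro x hx
    obtain ⟨hx1, hx2⟩ := Subgroup.mem_inf.mp hx
    obtain ⟨a, ha, b, hb, s, hs, heq⟩ := (sup_le hXK hYK) hx1
    have hsC : s ∈ C := by
      have hseq : s = (a * b)⁻¹ * x := by rw [← heq]; group
      rw [hseq]
      exact mul_mem (inv_mem (mul_mem (Subgroup.mem_inf.mp ha).2 (Subgroup.mem_inf.mp hb).2)) hx2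
    have hs1 : s = 1 := hCS s hsC hs
    have hxab : x = a * b := by rw [← heq, hs1, mul_one]
    rw [hxab]
    have haM : a ∈ (X ⊓ C) ⊔ (Y ⊓ C) := (le_sup_left : X ⊓ C ≤ (X ⊓ C) ⊔ (Y ⊓ C)) ha
    have hbM : b ∈ (X ⊓ C) ⊔ (Y ⊓ C) := (le_sup_right : Y ⊓ C ≤ (X ⊓ C) ⊔ (Y ⊓ C)) hb
    exact mul_mem haM hbM
  -- the numerical invariant
  have hpos : ∀ X : Subgroup G, 0 < Nat.card (X ⊓ C : Subgroup G) := fun X => Nat.card_pos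
  have hdvdn : ∀ X : Subgroup G, Nat.card (X ⊓ C : Subgroup G) ∣ n := fun X => by
    rw [← hcard]; exact Subgroup.card_dvd_of_le inf_le_right
  have hFdvd : ∀ X Y : Subgroup G, S ≤ X → S ≤ Y →
      (X ≤ Y ↔ Nat.card (X ⊓ C : Subgroup G) ∣ Nat.card (Y ⊓ C : Subgroup G)) := by
    intro X Y hX hY
    rw [hle_iff X Y hX hY]
    exact LMle_iff (g := g) inf_le_right inf_le_right
  have hFinj : ∀ X Y : Subgroup G, S ≤ X → S ≤ Y →
      Nat.card (X ⊓ C : Subgroup G) = Nat.card (Y ⊓ C : Subgroup G) → X = Y := by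
    intro X Y hX hY h
    exact le_antisymm ((hFdvd X Y hX hY).mpr (h ▸ dvd_rfl))
      ((hFdvd Y X hY hX).mpr (h ▸ dvd_rfl))
  have hgcd : ∀ X Y : Subgroup G,
      Nat.card ((X ⊓ Y) ⊓ C : Subgroup G)
        = Nat.gcd (Nat.card (X ⊓ C : Subgroup G)) (Nat.card (Y ⊓ C : Subgroup G)) := by
    intro X Y
    rw [inf_inf_distrib_right]
    exact LMcard_inf (g := g) inf_le_right inf_le_right
  have hlcm : ∀ X Y : Subgroup G, S ≤ X → S ≤ Y →
      Nat.card ((X ⊔ Y) ⊓ C : Subgroup G)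
        = Nat.lcm (Nat.card (X ⊓ C : Subgroup G)) (Nat.card (Y ⊓ C : Subgroup G)) := by
    intro X Y hX hY
    rw [hsupC X Y hX hY]
    exact LMcard_sup (g := g) inf_le_right inf_le_right
  -- diamond identities
  have key1 : ∀ X Y Z : Subgroup G, S ≤ X → S ≤ Y → X ≤ Z → Z ≤ X ⊔ Y →
      (Z ⊓ Y) ⊔ X = Z := by
    intro X Y Z hX hY hXZ hZ
    have hSZ : S ≤ Z := hX.trans hXZ
    apply hFinj _ _ (hX.trans le_sup_right) hSZ
    rw [hlcm (Z ⊓ Y) X (le_inf hSZ hY) hX, hgcd Z Y]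
    exact natN1 (hpos X) (hpos Y) (hpos Z) ((hFdvd X Z hX hSZ).mp hXZ)
      (by rw [← hlcm X Y hX hY]; exact (hFdvd Z (X ⊔ Y) hSZ (hX.trans le_sup_left)).mp hZ)
  have key2 : ∀ X Y W : Subgroup G, S ≤ X → S ≤ Y → X ⊓ Y ≤ W → W ≤ Y →
      (W ⊔ X) ⊓ Y = W := by
    intro X Y W hX hY hW hWY
    have hSW : S ≤ W := (le_inf hX hY).trans hW
    apply hFinj _ _ (le_inf (hSW.trans le_sup_left) hY) hSW
    rw [hgcd (W ⊔ X) Y, hlcm W X hSW hX]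
    exact natN2 (hpos X) (hpos Y) (hpos W)
      (by rw [← hgcd X Y]; exact (hFdvd (X ⊓ Y) W (le_inf hX hY) hSW).mp hW)
      ((hFdvd W Y hSW hY).mp hWY)
  -- covering transfer
  have cov : ∀ X Y : Subgroup G, S ≤ X → S ≤ Y → (X ⋖ X ⊔ Y ↔ X ⊓ Y ⋖ Y) := by
    intro X Y hX hY
    constructor
    · intro h
      have hlt : X ⊓ Y < Y := by
        refine lt_of_le_of_ne inf_le_right fun he => ?_
        have hYX : Y ≤ X := by rw [← he]; exact inf_le_left
        have : X ⊔ Y = X := sup_eq_left.mpr hYX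
        exact h.1.ne (this.symm)
      refine ⟨hlt, fun W hW1 hW2 => ?_⟩
      have hXZ : X < W ⊔ X := by
        refine lt_of_le_of_ne le_sup_right fun he => ?_
        have hWX : W ≤ X := by rw [he]; exact le_sup_left
        exact hW1.not_ge (le_inf hWX hW2.le)
      have hZlt : W ⊔ X < X ⊔ Y := by
        refine lt_of_le_of_ne (sup_le (hW2.le.trans le_sup_right) le_sup_left) fun he => ?_
        have := key2 X Y W hX hY hW1.le hW2.le
        rw [he, inf_eq_right.mpr le_sup_right] at this
        exact hW2.ne this.symm
      exact h.2 hXZ hZlt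
    · intro h
      have hlt : X < X ⊔ Y := by
        refine lt_of_le_of_ne le_sup_left fun he => ?_
        have hYX : Y ≤ X := by rw [he]; exact le_sup_right
        exact h.1.ne (inf_eq_right.mpr hYX)
      refine ⟨hlt, fun Z hZ1 hZ2 => ?_⟩
      have hW1 : X ⊓ Y < Z ⊓ Y := by
        refine lt_of_le_of_ne (inf_le_inf_right Y hZ1.le) fun he => ?_
        have hid := key1 X Y Z hX hY hZ1.le hZ2.le
        rw [← he, sup_eq_right.mpr inf_le_left] at hid
        exact hZ1.ne hid
      have hW2 : Z ⊓ Y < Y := by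
        refine lt_of_le_of_ne inf_le_right fun he => ?_
        have hYZ : Y ≤ Z := by rw [← he]; exact inf_le_left
        exact hZ2.not_ge (sup_le hZ1.le hYZ)
      exact h.2 hW1 hW2
  constructor
  · intro X Y hX hY
    constructor
    · rintro ⟨h1, h2⟩
      refine ⟨(cov X Y hX hY).mpr h2, ?_⟩
      have h1' : Y ⊓ X ⋖ X := by rwa [inf_comm]
      have := (cov Y X hY hX).mpr h1'
      rwa [sup_comm] at this
    · rintro ⟨h1, h2⟩
      have h2' : Y ⋖ Y ⊔ X := by rwa [sup_comm]
      have := (cov Y X hY hX).mp h2'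
      rw [inf_comm] at this
      exact ⟨this, (cov X Y hX hY).mp h1⟩
  · refine ⟨fun X => ⟨Nat.card (X.1 ⊓ C : Subgroup G), hpos X.1, hdvdn X.1⟩, ?_, ?_, ?_, ?_⟩
    · intro X Y h
      have h' : Nat.card (X.1 ⊓ C : Subgroup G) = Nat.card (Y.1 ⊓ C : Subgroup G) :=
        congrArg Subtype.val h
      exact Subtype.ext (hFinj X.1 Y.1 X.2 Y.2 h')
    · intro X Y
      exact hFdvd X.1 Y.1 X.2 Y.2
    · intro X Y
      exact hgcd X.1 Y.1
    · intro X Y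
      exact hlcm X.1 Y.1 X.2 Y.2
end

section
/- Let G be a finite group acting faithfully and transitively on a finite set Ω, ω ∈ Ω, and let A be a subgroup with G_ω ≤ A ≤ G. Then there exists a normal subgroup N of G whose orbit of ω equals the orbit of ω under A (equivalently, the imprimitivity system whose blocks are the translates of the A-orbit of ω is normal, i.e. its blocks are the orbits of a normal subgroup of G) if and only if A is core-complementary, i.e. A = G_ω · core_G(A) as subsets of G. -/
open Pointwise

/-- Let `G` act faithfully and transitively on a finite set `Ω`, let
`ω ∈ Ω` with stabilizer `G_ω`, and let `A` be a subgroup with `G_ω ≤ A ≤ G`. Then there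
is a normal subgroup `N` of `G` whose orbit of `ω` coincides with the `A`-orbit of `ω`
(i.e. the corresponding imprimitivity system is normal) if and only if `A` is
core-complementary, i.e. `A = G_ω · core_G(A)` as subsets of `G`. -/
theorem normal_system_iff_core_complementary {G Ω : Type*} [Group G] [Fintype Ω]
    [MulAction G Ω] [FaithfulSMul G Ω] (htrans : MulAction.IsPretransitive G Ω)
    (ω : Ω) (A : Subgroup G) (hA : MulAction.stabilizer G ω ≤ A) :
    (∃ N : Subgroup G, N.Normal ∧ MulAction.orbit N ω = MulAction.orbit A ω) ↔
      (A : Set G) = (MulAction.stabilizer G ω : Set G) * (A.normalCore : Set G) := by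
  constructor
  · rintro ⟨N, hN, horb⟩
    -- N ≤ A
    have hNA : N ≤ A := by
      intro n hn
      have hmem : (n : G) • ω ∈ MulAction.orbit A ω := by
        rw [← horb]; exact ⟨⟨n, hn⟩, rfl⟩
      obtain ⟨⟨a, ha⟩, hae⟩ := hmem
      have hae' : a • ω = (n : G) • ω := hae
      have hs : a⁻¹ * n ∈ MulAction.stabilizer G ω := by
        rw [MulAction.mem_stabilizer_iff, mul_smul, ← hae', inv_smul_smul]
      have : n = a * (a⁻¹ * n) := by group
      rw [this]
      exact A.mul_mem ha (hA hs)
    have hNcore : N ≤ A.normalCore := Subgroup.normal_le_normalCore.mpr hNA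
    ext g
    constructor
    · intro hg
      have hmem : g • ω ∈ MulAction.orbit N ω := by
        rw [horb]; exact ⟨⟨g, hg⟩, rfl⟩
      obtain ⟨⟨n, hn⟩, hne⟩ := hmem
      have hne' : n • ω = g • ω := hne
      have hs : n⁻¹ * g ∈ MulAction.stabilizer G ω := by
        rw [MulAction.mem_stabilizer_iff, mul_smul, ← hne', inv_smul_smul]
      refine ⟨n⁻¹ * g, hs, (n⁻¹ * g)⁻¹ * n * (n⁻¹ * g), ?_, by group⟩
      exact A.normalCore_normal.conj_mem' n (hNcore hn) (n⁻¹ * g)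
    · rintro ⟨s, hs, c, hc, rfl⟩
      exact A.mul_mem (hA hs) (A.normalCore_le hc)
  · intro h
    refine ⟨A.normalCore, A.normalCore_normal, le_antisymm ?_ ?_⟩
    · rintro x ⟨⟨n, hn⟩, rfl⟩
      exact ⟨⟨n, A.normalCore_le hn⟩, rfl⟩
    · rintro x ⟨⟨a, ha⟩, rfl⟩
      have : (a : G) ∈ (MulAction.stabilizer G ω : Set G) * (A.normalCore : Set G) := by
        rw [← h]; exact ha
      obtain ⟨s, hs, c, hc, hsc⟩ := this
      refine ⟨⟨s * c * s⁻¹, A.normalCore_normal.conj_mem c hc s⟩, ?_⟩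
      show (s * c * s⁻¹) • ω = a • ω
      have hs' : s⁻¹ • ω = ω :=
        MulAction.mem_stabilizer_iff.mp ((MulAction.stabilizer G ω).inv_mem hs)
      rw [← hsc, mul_smul, mul_smul, hs', mul_smul]
end

section
/- Let G be a finite group acting faithfully and transitively on a finite set Ω with point stabilizer G_ω. (a) If A ∈ L(G_ω,G) is core-complementary, then A is permutable with every B ∈ L(G_ω,G), i.e. AB = BA as subsets of G. (b) If A, B ∈ L(G_ω,G) are both core-complementary, then the set AB is a subgroup of G which is again core-complementary. -/
open Pointwise

/-- A subgroup `A` with `G_ω ≤ A ≤ G` is core-complementary if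
`A = G_ω · core_G(A)` as subsets of `G`. -/
def IsCoreComplementary {G Ω : Type*} [Group G] [MulAction G Ω] (ω : Ω)
    (A : Subgroup G) : Prop :=
  (A : Set G) = (MulAction.stabilizer G ω : Set G) * (A.normalCore : Set G)

/-!
Write `H = G_ω` and `N = core_G(A)`, so that `A = HN`. For `H ≤ B`, normality of `N` gives
`AB = HNB = HBN = BN` and `BA = BHN = BN`, hence `AB = BA`, and this set is the subgroup
`B ⊔ N`. If moreover `B = H · core_G(B)`, then `BN = H · core_G(B) · N` and
`core_G(B) · N` is a normal subgroup of `B ⊔ N`, hence lies in its core.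
-/

namespace Subgroup

variable {G : Type*} [Group G]

theorem coe_mul_coe_of_le {H K : Subgroup G} (h : H ≤ K) : (H : Set G) * K = K :=
  ((Set.mul_subset_mul_right h).trans (coe_mul_coe K).subset).antisymm
    (Set.subset_mul_right _ H.one_mem)

theorem coe_mul_coe_of_ge {H K : Subgroup G} (h : H ≤ K) : (K : Set G) * H = K :=
  ((Set.mul_subset_mul_left h).trans (coe_mul_coe K).subset).antisymm
    (Set.subset_mul_left _ H.one_mem)

variable {H B N : Subgroup G} [N.Normal]

theorem coe_mul_normal_mul_of_le (hHB : H ≤ B) : (H : Set G) * N * B = B * N := by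
  rw [mul_assoc, ← normal_mul, sup_comm, mul_normal, ← mul_assoc, coe_mul_coe_of_le hHB]

theorem coe_mul_comm_of_eq_mul_normal {A : Subgroup G} (hA : (A : Set G) = H * N)
    (hHB : H ≤ B) : (A : Set G) * B = B * A := by
  rw [hA, coe_mul_normal_mul_of_le hHB, ← mul_assoc, coe_mul_coe_of_ge hHB]

theorem coe_sup_normal_eq_mul_normalCore (hB : (B : Set G) = H * B.normalCore)
    (hHB : H ≤ B) : ((B ⊔ N : Subgroup G) : Set G) = H * (B ⊔ N).normalCore := by
  have hcore : B.normalCore ⊔ N ≤ (B ⊔ N).normalCore :=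
    normal_le_normalCore.mpr (sup_le_sup_right B.normalCore_le N)
  refine subset_antisymm ?_ (mul_subset (hHB.trans le_sup_left) (normalCore_le _))
  calc ((B ⊔ N : Subgroup G) : Set G)
      = H * ((B.normalCore ⊔ N : Subgroup G) : Set G) := by
        rw [mul_normal, hB, mul_assoc, mul_normal]
    _ ⊆ H * (B ⊔ N).normalCore := Set.mul_subset_mul_left hcore

end Subgroup

open Subgroup in
theorem core_complementary_permutable_general {G Ω : Type*} [Group G]
    [MulAction G Ω] (ω : Ω) :
    (∀ A B : Subgroup G, MulAction.stabilizer G ω ≤ A → MulAction.stabilizer G ω ≤ B →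
      IsCoreComplementary ω A →
      (A : Set G) * (B : Set G) = (B : Set G) * (A : Set G)) ∧
    (∀ A B : Subgroup G, MulAction.stabilizer G ω ≤ A → MulAction.stabilizer G ω ≤ B →
      IsCoreComplementary ω A → IsCoreComplementary ω B →
      ∃ C : Subgroup G, (C : Set G) = (A : Set G) * (B : Set G) ∧
        IsCoreComplementary ω C) := by
  refine ⟨fun A B _ hHB hA => coe_mul_comm_of_eq_mul_normal hA hHB, ?_⟩
  intro A B _ hHB hA hB
  refine ⟨B ⊔ A.normalCore, ?_, coe_sup_normal_eq_mul_normalCore hB hHB⟩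
  rw [mul_normal, show (A : Set G) = _ from hA, coe_mul_normal_mul_of_le hHB]

/-- Let `G` act faithfully and transitively on a finite set `Ω` with point
stabilizer `G_ω`. (a) If `A ∈ L(G_ω, G)` is core-complementary, then `A` is permutable
with every `B ∈ L(G_ω, G)`, i.e. `AB = BA` as subsets of `G`. (b) If `A, B ∈ L(G_ω, G)`
are both core-complementary, then the set `AB` is a subgroup of `G` which is again
core-complementary. -/
theorem core_complementary_permutable {G Ω : Type*} [Group G] [Fintype Ω]
    [MulAction G Ω] [FaithfulSMul G Ω] (htrans : MulAction.IsPretransitive G Ω)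
    (ω : Ω) :
    (∀ A B : Subgroup G, MulAction.stabilizer G ω ≤ A → MulAction.stabilizer G ω ≤ B →
      IsCoreComplementary ω A →
      (A : Set G) * (B : Set G) = (B : Set G) * (A : Set G)) ∧
    (∀ A B : Subgroup G, MulAction.stabilizer G ω ≤ A → MulAction.stabilizer G ω ≤ B →
      IsCoreComplementary ω A → IsCoreComplementary ω B →
      ∃ C : Subgroup G, (C : Set G) = (A : Set G) * (B : Set G) ∧
        IsCoreComplementary ω C) :=
  core_complementary_permutable_general ω
end

section
/- Let G be a finite group and let A, B ≤ G be permutable subgroups. If A ∩ B is a maximal subgroup of A and a maximal subgroup of B (i.e. A ∩ B ⋖ A and A ∩ B ⋖ B in the subgroup lattice of G), then A and B are maximal subgroups of ⟨A,B⟩ = AB (i.e. A ⋖ AB and B ⋖ AB). -/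
open Pointwise

private lemma sup_coe_eq_mul {G : Type*} [Group G] (A B : Subgroup G)
    (hperm : (A : Set G) * (B : Set G) = (B : Set G) * (A : Set G)) :
    ((A ⊔ B : Subgroup G) : Set G) = (A : Set G) * (B : Set G) := by
  have hsub : ∀ x y : G, x ∈ (A : Set G) * (B : Set G) → y ∈ (A : Set G) * (B : Set G) →
      x * y ∈ (A : Set G) * (B : Set G) := by
    rintro _ _ ⟨a, ha, b, hb, rfl⟩ ⟨a', ha', b', hb', rfl⟩
    have : b * a' ∈ (B : Set G) * (A : Set G) := ⟨b, hb, a', ha', rfl⟩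
    rw [← hperm] at this
    obtain ⟨a'', ha'', b'', hb'', h⟩ := this
    refine ⟨a * a'', mul_mem ha ha'', b'' * b', mul_mem hb'' hb', ?_⟩
    have h' : a'' * b'' = b * a' := h
    have h2 : a * (b * a') * b' = a * (a'' * b'') * b' := by rw [h']
    simpa [mul_assoc] using h2.symm
  have hinv : ∀ x : G, x ∈ (A : Set G) * (B : Set G) → x⁻¹ ∈ (A : Set G) * (B : Set G) := by
    rintro _ ⟨a, ha, b, hb, rfl⟩
    have : b⁻¹ * a⁻¹ ∈ (B : Set G) * (A : Set G) := ⟨b⁻¹, inv_mem hb, a⁻¹, inv_mem ha, rfl⟩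
    rw [← hperm] at this
    simpa [mul_inv_rev] using this
  let K : Subgroup G :=
    { carrier := (A : Set G) * (B : Set G)
      mul_mem' := fun {x y} hx hy => hsub x y hx hy
      one_mem' := ⟨1, one_mem A, 1, one_mem B, by simp⟩
      inv_mem' := fun {x} hx => hinv x hx }
  have hAK : A ≤ K := fun a ha => ⟨a, ha, 1, one_mem B, by simp⟩
  have hBK : B ≤ K := fun b hb => ⟨1, one_mem A, b, hb, by simp⟩
  have hKle : K ≤ A ⊔ B := by
    rintro _ ⟨a, ha, b, hb, rfl⟩
    exact mul_mem (Subgroup.mem_sup_left ha) (Subgroup.mem_sup_right hb)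
  have : A ⊔ B = K := le_antisymm (sup_le hAK hBK) hKle
  rw [this]
  rfl

private lemma cov_aux {G : Type*} [Group G] (A B : Subgroup G)
    (hset : ((A ⊔ B : Subgroup G) : Set G) = (A : Set G) * (B : Set G))
    (hB : A ⊓ B ⋖ B) : A ⋖ A ⊔ B := by
  constructor
  · refine lt_of_le_of_ne le_sup_left fun h => ?_
    have hBA : B ≤ A := h ▸ le_sup_right
    exact hB.lt.ne (by simp [inf_eq_right.mpr hBA])
  · intro Z hAZ hZ
    have hkey : Z ≤ A ⊔ (Z ⊓ B) := by
      intro z hz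
      have hz' : z ∈ (A : Set G) * (B : Set G) := hset ▸ hZ.le hz
      obtain ⟨a, ha, b, hb, rfl⟩ := hz'
      have haZ : a ∈ Z := hAZ.le ha
      have hbZ : b ∈ Z := by
        have := mul_mem (inv_mem haZ) hz
        simpa [mul_assoc] using this
      exact mul_mem (Subgroup.mem_sup_left ha) (Subgroup.mem_sup_right ⟨hbZ, hb⟩)
    have h1 : A ⊓ B ≤ Z ⊓ B := le_inf (inf_le_left.trans hAZ.le) inf_le_right
    rcases hB.eq_or_eq h1 inf_le_right with h | h
    · have : Z ≤ A := by
        calc Z ≤ A ⊔ (Z ⊓ B) := hkey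
        _ = A ⊔ (A ⊓ B) := by rw [h]
        _ = A := sup_inf_self
      exact hAZ.not_ge this
    · have hBZ : B ≤ Z := h ▸ inf_le_left
      exact hZ.not_ge (sup_le hAZ.le hBZ)

/-- Let `A, B` be permutable subgroups of a finite group `G`
(`AB = BA` as subsets). If `A ∩ B` is a maximal subgroup of `A` and of `B`
(i.e. `A ⊓ B ⋖ A` and `A ⊓ B ⋖ B` in the subgroup lattice), then `A` and `B` are
maximal subgroups of `⟨A, B⟩ = AB` (i.e. `A ⋖ A ⊔ B` and `B ⋖ A ⊔ B`, and
`A ⊔ B` equals the set `AB`). -/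
theorem maximal_in_join_of_permutable {G : Type*} [Group G] [Finite G]
    (A B : Subgroup G)
    (hperm : (A : Set G) * (B : Set G) = (B : Set G) * (A : Set G))
    (hA : A ⊓ B ⋖ A) (hB : A ⊓ B ⋖ B) :
    A ⋖ A ⊔ B ∧ B ⋖ A ⊔ B ∧ ((A ⊔ B : Subgroup G) : Set G) = (A : Set G) * (B : Set G) := by
  have hset : ((A ⊔ B : Subgroup G) : Set G) = (A : Set G) * (B : Set G) :=
    sup_coe_eq_mul A B hperm
  have hset' : ((B ⊔ A : Subgroup G) : Set G) = (B : Set G) * (A : Set G) :=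
    sup_coe_eq_mul B A hperm.symm
  refine ⟨cov_aux A B hset hB, ?_, hset⟩
  have : B ⋖ B ⊔ A := cov_aux B A hset' (by rwa [inf_comm])
  rwa [sup_comm] at this
end

section
/- Let G be a finite group acting faithfully and transitively on a finite set Ω with point stabilizer G_ω, and let h ∈ G be an element such that the cyclic subgroup H = ⟨h⟩ has exactly two orbits on Ω. If K ∈ L(G_ω,G) is H-intransitive (i.e. K·⟨h⟩ ≠ G as subsets of G), then K is core-complementary: K = G_ω · core_G(K) as subsets of G. Equivalently, every H-intransitive imprimitivity system of G is normal, i.e. its blocks are the orbits of a normal subgroup of G. -/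
/-!
Let `M` be the normal core of `K`, i.e. the kernel of `G` on the blocks `G ⧸ K`, let `d` be the
block size and `e` the common size of the `M`-orbits. As `⟨h⟩` is intransitive on the blocks, each
of its two orbits on `Ω` is a union of blocks, of size `d * p` resp. `d * q`, where `p` and `q` are
the lengths of the two cycles of `h` on `G ⧸ K`. Each of them is also an orbit of `M ⊔ ⟨h⟩`, whose
index over `M` is the order `n` of `h` on `G ⧸ K`, a divisor of `lcm p q`; so `d * p` and `d * q`
divide `n * e`, whence `d ∣ e`. Since `M`-orbits lie in blocks, `e ≤ d`: `M` is transitive on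
the block `K • ω`, which means `K = G_ω M`.
-/

open Pointwise MulAction

theorem Nat.dvd_of_mul_dvd_of_dvd_lcm {d e n p q : ℕ} (hp : d * p ∣ n * e) (hq : d * q ∣ n * e)
    (hn : n ∣ Nat.lcm p q) (hpq : 0 < Nat.lcm p q) : d ∣ e := by
  have hdn : Nat.lcm p q * d ∣ Nat.lcm p q * e := by
    rw [mul_comm, ← Nat.lcm_mul_left]
    exact (Nat.lcm_dvd hp hq).trans (Nat.mul_dvd_mul_right hn e)
  exact Nat.dvd_of_mul_dvd_mul_left hpq hdn

theorem Set.ncard_preimage_eq_mul {α β : Type*} [Finite α] {f : α → β} {s : Set β} {d : ℕ}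
    (hs : s.Finite) (hd : ∀ y ∈ s, (f ⁻¹' {y}).ncard = d) : (f ⁻¹' s).ncard = d * s.ncard := by
  lift s to Finset β using hs
  rw [Set.ncard_coe_finset, ← Nat.card_coe_set_eq,
    Finset.card_preimage_eq_sum_card_image_eq fun _ _ => Set.toFinite _]
  calc ∑ y ∈ s, Nat.card {a // f a = y} = ∑ _y ∈ s, d :=
        Finset.sum_congr rfl fun y hy => (Nat.card_coe_set_eq (f ⁻¹' {y})).trans (hd y hy)
    _ = d * s.card := by rw [Finset.sum_const, smul_eq_mul, mul_comm]

namespace Subgroup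

variable {G : Type*} [Group G]

theorem smul_eq_self_of_mem_normalCore {K : Subgroup G} {m : G} (hm : m ∈ K.normalCore)
    (y : G ⧸ K) : m • y = y := by
  rw [normalCore_eq_ker] at hm
  exact congrArg (· y) hm

theorem normalCore_relIndex_zpowers (K : Subgroup G) (h : G) :
    K.normalCore.relIndex (zpowers h) = orderOf (toPermHom G (G ⧸ K) h) := by
  rw [normalCore_eq_ker, relIndex_ker, MonoidHom.map_zpowers, Nat.card_zpowers]

theorem coe_mul_eq_univ_of_orbit_eq_univ {K H : Subgroup G} {y : G ⧸ K}
    (hy : orbit H y = Set.univ) : (K : Set G) * (H : Set G) = Set.univ := by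
  refine Set.eq_univ_of_forall fun g => ?_
  have hone : orbit H ((1 : G) : G ⧸ K) = Set.univ := (orbit_eq_iff.mpr (hy ▸ trivial)).trans hy
  obtain ⟨z, hz⟩ : ((g⁻¹ : G) : G ⧸ K) ∈ orbit H ((1 : G) : G ⧸ K) := hone ▸ trivial
  change (z : G) • ((1 : G) : G ⧸ K) = _ at hz
  rw [MulAction.Quotient.smul_mk, smul_eq_mul, mul_one, QuotientGroup.eq] at hz
  exact ⟨_, K.inv_mem hz, _, H.inv_mem z.2, by group⟩

end Subgroup

namespace MulAction

variable {G α β : Type*} [Group G] [MulAction G α] [MulAction G β]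

theorem ncard_orbit_zpowers (h : G) (y : β) :
    (orbit (Subgroup.zpowers h) y).ncard = Function.minimalPeriod (h • ·) y :=
  (Nat.card_coe_set_eq _).symm.trans
    ((Nat.card_congr (orbitZPowersEquiv h y)).trans (Nat.card_zmod _))

theorem minimalPeriod_eq_of_mem_orbit {h : G} {y y₀ : β}
    (hy : y ∈ orbit (Subgroup.zpowers h) y₀) :
    Function.minimalPeriod (h • ·) y = Function.minimalPeriod (h • ·) y₀ := by
  rw [← ncard_orbit_zpowers, ← ncard_orbit_zpowers, orbit_eq_iff.mpr hy]

theorem orderOf_toPermHom_dvd {h : G} {n : ℕ}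
    (hn : ∀ y : β, Function.minimalPeriod (h • ·) y ∣ n) : orderOf (toPermHom G β h) ∣ n :=
  orderOf_dvd_of_pow_eq_one <| Equiv.ext fun y => by
    rw [← map_pow, toPermHom_apply, toPerm_apply, Equiv.Perm.one_apply,
      pow_smul_eq_iff_minimalPeriod_dvd]
    exact hn y

theorem ncard_orbit_dvd_relIndex_mul {M X : Subgroup G} (hMX : M ≤ X) (x : α) :
    (orbit X x).ncard ∣ M.relIndex X * (orbit M x).ncard := by
  have key (N : Subgroup G) : (orbit N x).ncard = (stabilizer G x).relIndex N := by
    rw [← index_stabilizer]; rfl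
  rw [key, key, mul_comm, ← Subgroup.inf_relIndex_right (stabilizer G x) M,
    Subgroup.relIndex_mul_relIndex _ _ _ inf_le_right hMX]
  exact Subgroup.relIndex_dvd_of_le_left X inf_le_left

theorem ncard_orbit_eq_of_normal [IsPretransitive G α] (N : Subgroup G) [N.Normal] (x y : α) :
    (orbit N x).ncard = (orbit N y).ncard := by
  obtain ⟨g, rfl⟩ := exists_smul_eq G y x
  rw [← smul_orbit_eq_orbit_smul, Set.ncard_smul_set]

theorem le_stabilizer_sup_of_orbit_subset {K N : Subgroup G} {x : α}
    (hKN : orbit K x ⊆ orbit N x) : K ≤ stabilizer G x ⊔ N := by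
  intro k hk
  obtain ⟨n, hn⟩ := hKN ⟨⟨k, hk⟩, rfl⟩
  have hstab : (n : G)⁻¹ * k ∈ stabilizer G x := by
    rw [mem_stabilizer_iff, mul_smul, inv_smul_eq_iff]; exact hn.symm
  simpa using Subgroup.mul_mem _ (Subgroup.mem_sup_right n.2) (Subgroup.mem_sup_left hstab)

theorem coe_eq_stabilizer_mul_normalCore {ω : α} {K : Subgroup G} (hK : stabilizer G ω ≤ K)
    (hKM : orbit K ω ⊆ orbit K.normalCore ω) :
    (K : Set G) = (stabilizer G ω : Set G) * (K.normalCore : Set G) := by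
  have hKeq : K = stabilizer G ω ⊔ K.normalCore :=
    le_antisymm (le_stabilizer_sup_of_orbit_subset hKM) (sup_le hK K.normalCore_le)
  rw [← Subgroup.mul_normal, ← hKeq]

end MulAction

namespace MulActionHom

variable {G α β : Type*} [Group G] [MulAction G α] [MulAction G β] {H : Subgroup G}
  (f : α →[G] β)

theorem map_mem_orbit {x u : α} (hu : u ∈ orbit H x) : f u ∈ orbit H (f x) := by
  obtain ⟨z, rfl⟩ := hu
  exact ⟨z, (f.map_smul (z : G) x).symm⟩

theorem preimage_orbit_eq_orbit {x y : α} (hcover : ∀ u, u ∈ orbit H x ∨ u ∈ orbit H y)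
    (hxy : f y ∉ orbit H (f x)) : f ⁻¹' orbit H (f x) = orbit H x := by
  refine subset_antisymm (fun u hu => (hcover u).resolve_right fun huy => hxy ?_)
    (fun u hu => f.map_mem_orbit hu)
  exact orbit_eq_iff.mp
    ((orbit_eq_iff.mpr (f.map_mem_orbit huy)).symm.trans (orbit_eq_iff.mpr hu))

theorem orbit_eq_univ_of_mem_orbit (hf : Function.Surjective f) {x y : α}
    (hcover : ∀ u, u ∈ orbit H x ∨ u ∈ orbit H y) (hxy : f y ∈ orbit H (f x)) :
    orbit H (f x) = Set.univ := by
  refine Set.eq_univ_of_forall fun v => ?_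
  obtain ⟨u, rfl⟩ := hf v
  rcases hcover u with hu | hu
  · exact f.map_mem_orbit hu
  · rw [← orbit_eq_iff.mpr hxy]; exact f.map_mem_orbit hu

theorem orbit_sup_eq_orbit {N : Subgroup G} (hN : ∀ n ∈ N, ∀ y : β, n • y = y) {x : α}
    (hx : f ⁻¹' orbit H (f x) = orbit H x) : orbit ↥(N ⊔ H) x = orbit H x := by
  have hle : N ⊔ H ≤ stabilizer G (orbit H x) := by
    refine sup_le (fun n hn => mem_stabilizer_set.mpr fun u => ?_)
      (fun z hz => mem_stabilizer_set.mpr fun u => ?_)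
    · rw [← hx, Set.mem_preimage, Set.mem_preimage, map_smul, hN n hn]
    · rw [← orbit_eq_iff, ← orbit_eq_iff]
      exact Eq.congr_left (orbit_smul (⟨z, hz⟩ : H) u)
  refine subset_antisymm ?_ fun _ ⟨z, hz⟩ => ⟨⟨z, Subgroup.mem_sup_right z.2⟩, hz⟩
  rintro _ ⟨g, rfl⟩
  exact (mem_stabilizer_set.mp (hle g.2) x).mpr (mem_orbit_self x)

theorem ncard_preimage_smul_singleton (g : G) (y : β) :
    (f ⁻¹' {g • y}).ncard = (f ⁻¹' {y}).ncard := by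
  rw [← Set.smul_set_singleton, Group.preimage_smul_set f g, Set.ncard_smul_set]

end MulActionHom

namespace MulAction

variable {G α : Type*} [Group G] [MulAction G α] [IsPretransitive G α] {ω : α} {K : Subgroup G}

/-- The `G`-map `g • ω ↦ gK`; its fibres are the blocks of the imprimitivity system of `K`. -/
noncomputable def cosetMap (hK : stabilizer G ω ≤ K) : α →[G] G ⧸ K where
  toFun x := ((exists_smul_eq G ω x).choose : G ⧸ K)
  map_smul' g x := by
    have key (g : G) : ((exists_smul_eq G ω (g • ω)).choose : G ⧸ K) = g := by
      refine QuotientGroup.eq.mpr (K.inv_mem_iff.mp (hK ?_))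
      rw [mem_stabilizer_iff, mul_inv_rev, inv_inv, mul_smul, inv_smul_eq_iff,
        (exists_smul_eq G ω (g • ω)).choose_spec]
    obtain ⟨c, rfl⟩ := exists_smul_eq G ω x
    change ((exists_smul_eq G ω (g • c • ω)).choose : G ⧸ K) =
      g • ((exists_smul_eq G ω (c • ω)).choose : G ⧸ K)
    rw [smul_smul, key, key]
    rfl

variable (hK : stabilizer G ω ≤ K)

theorem cosetMap_self : cosetMap hK ω = ((1 : G) : G ⧸ K) :=
  QuotientGroup.eq.mpr (by simpa using hK (exists_smul_eq G ω ω).choose_spec)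

theorem cosetMap_apply_smul (g : G) : cosetMap hK (g • ω) = g := by
  rw [map_smul, cosetMap_self, MulAction.Quotient.smul_mk, smul_eq_mul, mul_one]

theorem cosetMap_surjective : Function.Surjective (cosetMap hK) := fun y =>
  QuotientGroup.mk_surjective y |>.elim fun g hg => ⟨g • ω, hg ▸ cosetMap_apply_smul hK g⟩

theorem ncard_preimage_cosetMap (y : G ⧸ K) :
    (cosetMap hK ⁻¹' {y}).ncard = (cosetMap hK ⁻¹' {cosetMap hK ω}).ncard := by
  obtain ⟨g, rfl⟩ := QuotientGroup.mk_surjective y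
  rw [← cosetMap_apply_smul hK g, map_smul, MulActionHom.ncard_preimage_smul_singleton]

theorem orbit_subset_preimage_cosetMap {N : Subgroup G} (hN : N ≤ K) :
    orbit N ω ⊆ cosetMap hK ⁻¹' {cosetMap hK ω} := by
  rintro _ ⟨n, rfl⟩
  change cosetMap hK ((n : G) • ω) = cosetMap hK ω
  rw [cosetMap_apply_smul, cosetMap_self]
  exact QuotientGroup.eq.mpr (by simpa using hN n.2)

theorem orbit_subset_orbit_normalCore_of_dvd [Finite α]
    (hde : (cosetMap hK ⁻¹' {cosetMap hK ω}).ncard ∣ (orbit K.normalCore ω).ncard) :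
    orbit K ω ⊆ orbit K.normalCore ω := by
  have hsub := orbit_subset_preimage_cosetMap hK K.normalCore_le
  have hpos : 0 < (orbit K.normalCore ω).ncard :=
    (Set.ncard_pos (Set.toFinite _)).mpr ⟨ω, mem_orbit_self ω⟩
  rw [Set.eq_of_subset_of_ncard_le hsub (Nat.le_of_dvd hpos hde) (Set.toFinite _)]
  exact orbit_subset_preimage_cosetMap hK le_rfl

theorem ncard_preimage_mul_minimalPeriod_dvd [Finite α] (h : G) {x : α}
    (hx : cosetMap hK ⁻¹' orbit (Subgroup.zpowers h) (cosetMap hK x) =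
      orbit (Subgroup.zpowers h) x) :
    (cosetMap hK ⁻¹' {cosetMap hK ω}).ncard * Function.minimalPeriod (h • ·) (cosetMap hK x) ∣
      orderOf (toPermHom G (G ⧸ K) h) * (orbit K.normalCore ω).ncard := by
  have : Finite (G ⧸ K) := Finite.of_surjective _ (cosetMap_surjective hK)
  calc _ = (orbit (Subgroup.zpowers h) x).ncard := by
        rw [← hx, Set.ncard_preimage_eq_mul (Set.toFinite (orbit (Subgroup.zpowers h) _))
          fun y _ => ncard_preimage_cosetMap hK y]
        exact congrArg _ (ncard_orbit_zpowers h _).symm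
    _ = (orbit ↥(K.normalCore ⊔ Subgroup.zpowers h) x).ncard := by
        rw [(cosetMap hK).orbit_sup_eq_orbit
          (fun _ => Subgroup.smul_eq_self_of_mem_normalCore) hx]
    _ ∣ K.normalCore.relIndex (K.normalCore ⊔ Subgroup.zpowers h) *
          (orbit K.normalCore x).ncard :=
        ncard_orbit_dvd_relIndex_mul le_sup_left x
    _ = _ := by
        rw [Subgroup.relIndex_sup_left, Subgroup.normalCore_relIndex_zpowers,
          ncard_orbit_eq_of_normal]

end MulAction

theorem core_complementary_of_H_intransitive_general {G Ω : Type*} [Group G] [Fintype Ω]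
    [MulAction G Ω] (htrans : MulAction.IsPretransitive G Ω)
    (ω : Ω) (h : G) (a b : Ω)
    (horb : ∀ x : Ω, x ∈ MulAction.orbit (Subgroup.zpowers h) a ∨
      x ∈ MulAction.orbit (Subgroup.zpowers h) b)
    (K : Subgroup G) (hK : MulAction.stabilizer G ω ≤ K)
    (hintr : (K : Set G) * (Subgroup.zpowers h : Set G) ≠ (Set.univ : Set G)) :
    (K : Set G) = (MulAction.stabilizer G ω : Set G) * (K.normalCore : Set G) := by
  set π := cosetMap hK
  have hsep : π b ∉ orbit (Subgroup.zpowers h) (π a) := fun hba =>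
    hintr (Subgroup.coe_mul_eq_univ_of_orbit_eq_univ
      (π.orbit_eq_univ_of_mem_orbit (cosetMap_surjective hK) horb hba))
  have hdvd_a := ncard_preimage_mul_minimalPeriod_dvd hK h (π.preimage_orbit_eq_orbit horb hsep)
  have hdvd_b := ncard_preimage_mul_minimalPeriod_dvd hK h
    (π.preimage_orbit_eq_orbit (fun u => (horb u).symm) (hsep ∘ mem_orbit_symm.mp))
  have hperiod : orderOf (toPermHom G (G ⧸ K) h) ∣
      Nat.lcm (Function.minimalPeriod (h • ·) (π a)) (Function.minimalPeriod (h • ·) (π b)) := by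
    refine orderOf_toPermHom_dvd fun y => ?_
    obtain ⟨u, rfl⟩ := cosetMap_surjective hK y
    rcases horb u with hu | hu
    · exact (minimalPeriod_eq_of_mem_orbit (π.map_mem_orbit hu)).symm ▸ Nat.dvd_lcm_left _ _
    · exact (minimalPeriod_eq_of_mem_orbit (π.map_mem_orbit hu)).symm ▸ Nat.dvd_lcm_right _ _
  have : Finite (G ⧸ K) := Finite.of_surjective π (cosetMap_surjective hK)
  have hde := Nat.dvd_of_mul_dvd_of_dvd_lcm hdvd_a hdvd_b hperiod
    (Nat.lcm_pos (NeZero.pos _) (NeZero.pos _))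
  exact coe_eq_stabilizer_mul_normalCore hK (orbit_subset_orbit_normalCore_of_dvd hK hde)

/-- Let `G` act faithfully and transitively on a finite set `Ω` with point
stabilizer `G_ω`, and let `h ∈ G` be such that the cyclic subgroup `H = ⟨h⟩` has exactly
two orbits on `Ω`. If `K ∈ L(G_ω, G)` is `H`-intransitive (i.e. `K·⟨h⟩ ≠ G` as sets),
then `K` is core-complementary: `K = G_ω · core_G(K)` as subsets of `G`. -/
theorem core_complementary_of_H_intransitive {G Ω : Type*} [Group G] [Fintype Ω]
    [MulAction G Ω] [FaithfulSMul G Ω] (htrans : MulAction.IsPretransitive G Ω)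
    (ω : Ω) (h : G) (a b : Ω)
    (hab : MulAction.orbit (Subgroup.zpowers h) a ≠ MulAction.orbit (Subgroup.zpowers h) b)
    (horb : ∀ x : Ω, x ∈ MulAction.orbit (Subgroup.zpowers h) a ∨
      x ∈ MulAction.orbit (Subgroup.zpowers h) b)
    (K : Subgroup G) (hK : MulAction.stabilizer G ω ≤ K)
    (hintr : (K : Set G) * (Subgroup.zpowers h : Set G) ≠ (Set.univ : Set G)) :
    (K : Set G) = (MulAction.stabilizer G ω : Set G) * (K.normalCore : Set G) :=
  core_complementary_of_H_intransitive_general htrans ω h a b horb K hK hintr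
end

section
/- Let G be a finite group acting faithfully and transitively on a finite set Ω with point stabilizer G_ω, and let h ∈ G be such that the cyclic subgroup H = ⟨h⟩ has exactly two orbits on Ω, of lengths n₁ and n₂. Suppose K ∈ L(G_ω,G) is H-transitive (K·⟨h⟩ = G as sets) but not core-complementary. Then n₁ = n₂, and there exists a subgroup K' ∈ L(G_ω,G) with K' ≤ K and index [K : K'] = 2 such that K' is core-complementary and H-intransitive, and moreover every H-intransitive subgroup L ∈ L(G_ω,G) with L ≤ K satisfies L ≤ K'. -/
/-!
Let `m` be the period of `h` on `G ⧸ K`. As `⟨h⟩` is transitive on `G ⧸ K`, all points there have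
period `m`, so `g⁻¹ h^t g ∈ K ↔ m ∣ t` for every `g`; hence `⟨h^m⟩` lies in the core `N` of `K`,
and the orbit `Kω` meets the `⟨h⟩`-orbit of any of its points `x` exactly in `⟨h^m⟩x`.
Put `K' = N G_ω`: it is core-complementary, so it is a proper subgroup of `K`; pick `k₀ ∈ K ∖ K'`.
Then `k₀ω ∉ ⟨h⟩ω`, so the two `⟨h⟩`-orbits are those of `ω` and `k₀ω`, and the `N`-orbits
`Nω` and `Nk₀ω = k₀Nω` are `⟨h^m⟩ω` and `⟨h^m⟩k₀ω`. Their equal sizes give `n₁ = n₂`;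
`K ∖ K' ⊆ k₀K'` gives the index, and since `K'ω ⊆ ⟨h⟩ω` while `Lω` meets both `⟨h⟩`-orbits
as soon as `L ⊄ K'`, `K'` is the largest `⟨h⟩`-intransitive subgroup between `G_ω` and `K`.
-/

open Pointwise

open MulAction Subgroup

section Orbits

variable {G α : Type*} [Group G] [MulAction G α]

theorem mem_orbit_zpowers_iff {g : G} {x y : α} :
    y ∈ orbit (zpowers g) x ↔ ∃ t : ℤ, g ^ t • x = y := by
  constructor
  · rintro ⟨⟨_, t, rfl⟩, rfl⟩
    exact ⟨t, rfl⟩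
  · rintro ⟨t, rfl⟩
    exact ⟨⟨g ^ t, t, rfl⟩, rfl⟩

theorem orbit_subset_orbit_of_le {A B : Subgroup G} (hAB : A ≤ B) (x : α) :
    orbit A x ⊆ orbit B x := by
  rintro _ ⟨a, rfl⟩
  exact ⟨⟨a, hAB a.2⟩, rfl⟩

theorem orbit_eq_of_subset_union {A B : Subgroup G} (hAB : A ≤ B) {x y : α}
    (hcover : orbit B x ⊆ orbit A x ∪ orbit A y) (hy : y ∉ orbit B x) :
    orbit B x = orbit A x := by
  refine (Set.Subset.antisymm fun z hz ↦ (hcover hz).resolve_right fun hzy ↦ hy ?_)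
    (orbit_subset_orbit_of_le hAB x)
  rw [← orbit_eq_iff.mpr hz]
  exact orbit_subset_orbit_of_le hAB z (mem_orbit_symm.mp hzy)

theorem orbits_eq_or_of_forall_mem_orbit_or {a b y z : α}
    (hab : ∀ x : α, x ∈ orbit G a ∨ x ∈ orbit G b) (hyz : y ∉ orbit G z) :
    (orbit G a = orbit G y ∧ orbit G b = orbit G z) ∨
      (orbit G a = orbit G z ∧ orbit G b = orbit G y) := by
  rcases hab y with hy | hy <;> rcases hab z with hz | hz
  · exact absurd (by rwa [orbit_eq_iff.mpr hz]) hyz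
  · exact .inl ⟨(orbit_eq_iff.mpr hy).symm, (orbit_eq_iff.mpr hz).symm⟩
  · exact .inr ⟨(orbit_eq_iff.mpr hz).symm, (orbit_eq_iff.mpr hy).symm⟩
  · exact absurd (by rwa [orbit_eq_iff.mpr hz]) hyz

theorem card_orbit_zpowers [Finite α] (g : G) (x : α) :
    Nat.card (orbit (zpowers g) x) = period g x := by
  have := Fintype.ofFinite (orbit (zpowers g) x)
  rw [Nat.card_eq_fintype_card, period_eq_minimalPeriod, minimalPeriod_eq_card]

theorem card_orbit_zpowers_pow_mul [Finite α] {g : G} {x : α} {m : ℕ} (hm : m ∣ period g x) :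
    Nat.card (orbit (zpowers (g ^ m)) x) * m = Nat.card (orbit (zpowers g) x) := by
  have hm0 : m ≠ 0 := by
    rintro rfl
    exact (minimalPeriod_pos g x).out (Nat.eq_zero_of_zero_dvd hm)
  rw [card_orbit_zpowers, card_orbit_zpowers, period_eq_minimalPeriod,
    ← smul_iterate, Function.minimalPeriod_iterate_eq_div_gcd hm0, ← period_eq_minimalPeriod,
    Nat.gcd_eq_right hm, Nat.div_mul_cancel hm]

theorem mem_of_smul_eq_smul {A : Subgroup G} {ω : α} (hA : stabilizer G ω ≤ A) {g u : G}
    (hu : u ∈ A) (he : g • ω = u • ω) : g ∈ A := by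
  have : u⁻¹ * g ∈ stabilizer G ω := by
    rw [mem_stabilizer_iff, mul_smul, he, inv_smul_smul]
  simpa using A.mul_mem hu (hA this)

theorem mem_normal_sup_stabilizer_iff {N : Subgroup G} [N.Normal] {ω : α} {g : G} :
    g ∈ N ⊔ stabilizer G ω ↔ g • ω ∈ orbit N ω := by
  rw [← SetLike.mem_coe, normal_mul, Set.mem_mul]
  constructor
  · rintro ⟨n, hn, s, hs, rfl⟩
    exact ⟨⟨n, hn⟩, by rw [mul_smul, mem_stabilizer_iff.mp hs]; rfl⟩
  · rintro ⟨n, hn⟩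
    refine ⟨n, n.2, (n : G)⁻¹ * g, ?_, mul_inv_cancel_left _ _⟩
    rw [SetLike.mem_coe, mem_stabilizer_iff, mul_smul, ← hn]
    exact inv_smul_smul (n : G) ω

theorem isCoreComplementary_normal_sup_stabilizer (N : Subgroup G) [N.Normal] (ω : α) :
    IsCoreComplementary ω (N ⊔ stabilizer G ω) := by
  have hN : N ≤ (N ⊔ stabilizer G ω).normalCore := normal_le_normalCore.mpr le_sup_left
  refine Set.Subset.antisymm ?_ ?_
  · conv_lhs => rw [sup_comm, mul_normal]
    exact Set.mul_subset_mul_left hN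
  · rintro _ ⟨s, hs, n, hn, rfl⟩
    exact mul_mem (le_sup_right (a := N) hs) (normalCore_le _ hn)

theorem mul_zpowers_eq_univ_iff {L : Subgroup G} {ω : α} (hL : stabilizer G ω ≤ L) (h : G) :
    (L : Set G) * (zpowers h : Set G) = Set.univ ↔
      ∀ g : G, ∃ l ∈ L, g • ω ∈ orbit (zpowers h) (l • ω) := by
  constructor
  · intro hLh g
    obtain ⟨l, hl, _, ⟨j, rfl⟩, hg⟩ := Set.mem_mul.mp (hLh ▸ Set.mem_univ g⁻¹)
    refine ⟨l⁻¹, L.inv_mem hl, mem_orbit_zpowers_iff.mpr ⟨-j, ?_⟩⟩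
    rw [smul_smul, ← inv_inv g, ← hg]
    group
  · refine fun hcov ↦ Set.eq_univ_of_forall fun g ↦ ?_
    obtain ⟨l, hl, hg⟩ := hcov g⁻¹
    obtain ⟨t, ht⟩ := mem_orbit_zpowers_iff.mp hg
    have : h ^ (-t) * g⁻¹ ∈ L := mem_of_smul_eq_smul hL hl <| by
      rw [mul_smul, ← ht, smul_smul, ← zpow_add, neg_add_cancel, zpow_zero, one_smul]
    exact Set.mem_mul.mpr ⟨_, L.inv_mem this, h ^ (-t), ⟨-t, rfl⟩, by group⟩

end Orbits

section CosetPeriod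

variable {G : Type*} [Group G] {K : Subgroup G} {h : G}

theorem conj_zpow_mem_iff_period_dvd (hKh : (K : Set G) * (zpowers h : Set G) = Set.univ)
    (g : G) (t : ℤ) : g⁻¹ * h ^ t * g ∈ K ↔ (period h ((1 : G) : G ⧸ K) : ℤ) ∣ t := by
  obtain ⟨k, hk, _, ⟨j, rfl⟩, hkj⟩ := Set.mem_mul.mp (hKh ▸ Set.mem_univ g⁻¹)
  have hg : (g : G ⧸ K) = h ^ (-j) • ((1 : G) : G ⧸ K) := by
    rw [Quotient.smul_coe, smul_eq_mul, mul_one, QuotientGroup.eq, ← hkj]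
    simpa using hk
  rw [mul_assoc, ← QuotientGroup.eq, ← smul_eq_mul, ← Quotient.smul_coe, eq_comm, hg, smul_smul,
    ← zpow_add, add_comm, zpow_add, mul_smul, smul_left_cancel_iff, zpow_smul_eq_iff_period_dvd]

theorem zpow_mem_iff_period_dvd (hKh : (K : Set G) * (zpowers h : Set G) = Set.univ) (t : ℤ) :
    h ^ t ∈ K ↔ (period h ((1 : G) : G ⧸ K) : ℤ) ∣ t := by
  simpa using conj_zpow_mem_iff_period_dvd hKh 1 t

theorem zpowers_pow_period_le_normalCore
    (hKh : (K : Set G) * (zpowers h : Set G) = Set.univ) :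
    zpowers (h ^ period h ((1 : G) : G ⧸ K)) ≤ K.normalCore := by
  rw [zpowers_le]
  intro g
  simpa [mul_assoc] using (conj_zpow_mem_iff_period_dvd hKh g⁻¹ (period h _)).mpr dvd_rfl

end CosetPeriod

section StabilizerLE

variable {G α : Type*} [Group G] [MulAction G α] {K : Subgroup G} {h : G} {ω : α}

theorem mem_orbit_zpowers_pow_period_of_mem_orbit_zpowers (hK : stabilizer G ω ≤ K)
    (hKh : (K : Set G) * (zpowers h : Set G) = Set.univ) {x y : α} (hx : x ∈ orbit K ω)
    (hy : y ∈ orbit K ω) (hxy : y ∈ orbit (zpowers h) x) :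
    y ∈ orbit (zpowers (h ^ period h ((1 : G) : G ⧸ K))) x := by
  obtain ⟨k, rfl⟩ := hx
  obtain ⟨k', rfl⟩ := hy
  obtain ⟨t, ht⟩ := mem_orbit_zpowers_iff.mp hxy
  have hhk : h ^ t * k ∈ K := mem_of_smul_eq_smul hK k'.2 (by rw [mul_smul]; exact ht)
  obtain ⟨s, rfl⟩ := (zpow_mem_iff_period_dvd hKh t).mp ((K.mul_mem_cancel_right k.2).mp hhk)
  exact mem_orbit_zpowers_iff.mpr ⟨s, by rw [← zpow_natCast, ← zpow_mul, ht]⟩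

theorem period_dvd_period_of_mem_orbit (hK : stabilizer G ω ≤ K)
    (hKh : (K : Set G) * (zpowers h : Set G) = Set.univ) {x : α} (hx : x ∈ orbit K ω) :
    period h ((1 : G) : G ⧸ K) ∣ period h x := by
  obtain ⟨k, rfl⟩ := hx
  have hfix : (k : G)⁻¹ * h ^ (period h (k • ω) : ℤ) * k ∈ K := hK <| by
    rw [mem_stabilizer_iff, mul_smul, mul_smul, zpow_natCast]
    exact inv_smul_eq_iff.mpr (pow_period_smul h (k • ω))
  exact_mod_cast (conj_zpow_mem_iff_period_dvd hKh k _).mp hfix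

theorem mem_normalCore_sup_stabilizer_of_smul_mem_orbit (hK : stabilizer G ω ≤ K)
    (hKh : (K : Set G) * (zpowers h : Set G) = Set.univ) {k : G} (hk : k ∈ K)
    (hkω : k • ω ∈ orbit (zpowers h) ω) : k ∈ K.normalCore ⊔ stabilizer G ω :=
  mem_normal_sup_stabilizer_iff.mpr <| orbit_subset_orbit_of_le
    (zpowers_pow_period_le_normalCore hKh) ω <|
    mem_orbit_zpowers_pow_period_of_mem_orbit_zpowers hK hKh (mem_orbit_self ω) ⟨⟨k, hk⟩, rfl⟩ hkω

end StabilizerLE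

section TwoOrbits

variable {G α : Type*} [Group G] [MulAction G α] {K : Subgroup G} {h k₀ : G} {ω : α}

theorem orbit_subset_union_orbit_zpowers_pow_period (hK : stabilizer G ω ≤ K)
    (hKh : (K : Set G) * (zpowers h : Set G) = Set.univ) (hk₀ : k₀ ∈ K)
    (hα : ∀ x : α, x ∈ orbit (zpowers h) ω ∨ x ∈ orbit (zpowers h) (k₀ • ω)) :
    orbit K ω ⊆ orbit (zpowers (h ^ period h ((1 : G) : G ⧸ K))) ω ∪
      orbit (zpowers (h ^ period h ((1 : G) : G ⧸ K))) (k₀ • ω) := fun x hx ↦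
  (hα x).imp
    (mem_orbit_zpowers_pow_period_of_mem_orbit_zpowers hK hKh (mem_orbit_self ω) hx)
    (mem_orbit_zpowers_pow_period_of_mem_orbit_zpowers hK hKh ⟨⟨k₀, hk₀⟩, rfl⟩ hx)

theorem orbit_normalCore_eq_orbit_zpowers_pow_period (hK : stabilizer G ω ≤ K)
    (hKh : (K : Set G) * (zpowers h : Set G) = Set.univ) (hk₀ : k₀ ∈ K)
    (hk₀' : k₀ ∉ K.normalCore ⊔ stabilizer G ω)
    (hα : ∀ x : α, x ∈ orbit (zpowers h) ω ∨ x ∈ orbit (zpowers h) (k₀ • ω)) :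
    orbit K.normalCore ω = orbit (zpowers (h ^ period h ((1 : G) : G ⧸ K))) ω :=
  orbit_eq_of_subset_union (zpowers_pow_period_le_normalCore hKh)
    ((orbit_subset_orbit_of_le K.normalCore_le ω).trans
      (orbit_subset_union_orbit_zpowers_pow_period hK hKh hk₀ hα))
    (mt mem_normal_sup_stabilizer_iff.mpr hk₀')

theorem orbit_normalCore_smul_eq_orbit_zpowers_pow_period (hK : stabilizer G ω ≤ K)
    (hKh : (K : Set G) * (zpowers h : Set G) = Set.univ) (hk₀ : k₀ ∈ K)
    (hk₀' : k₀ ∉ K.normalCore ⊔ stabilizer G ω)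
    (hα : ∀ x : α, x ∈ orbit (zpowers h) ω ∨ x ∈ orbit (zpowers h) (k₀ • ω)) :
    orbit K.normalCore (k₀ • ω) = orbit (zpowers (h ^ period h ((1 : G) : G ⧸ K))) (k₀ • ω) := by
  have hcover := orbit_subset_union_orbit_zpowers_pow_period hK hKh hk₀ hα
  rw [← orbit_smul (⟨k₀, hk₀⟩ : K), Set.union_comm] at hcover
  exact orbit_eq_of_subset_union (zpowers_pow_period_le_normalCore hKh)
    ((orbit_subset_orbit_of_le K.normalCore_le _).trans hcover)
    fun hω ↦ hk₀' (mem_normal_sup_stabilizer_iff.mpr (mem_orbit_symm.mp hω))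

theorem period_smul_eq_period [Finite α] (hK : stabilizer G ω ≤ K)
    (hKh : (K : Set G) * (zpowers h : Set G) = Set.univ) (hk₀ : k₀ ∈ K)
    (hk₀' : k₀ ∉ K.normalCore ⊔ stabilizer G ω)
    (hα : ∀ x : α, x ∈ orbit (zpowers h) ω ∨ x ∈ orbit (zpowers h) (k₀ • ω)) :
    period h (k₀ • ω) = period h ω := by
  have hdvd {x : α} (hx : x ∈ orbit K ω) := period_dvd_period_of_mem_orbit hK hKh hx
  rw [← card_orbit_zpowers, ← card_orbit_zpowers,
    ← card_orbit_zpowers_pow_mul (hdvd (x := k₀ • ω) ⟨⟨k₀, hk₀⟩, rfl⟩),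
    ← card_orbit_zpowers_pow_mul (hdvd (mem_orbit_self ω)),
    ← orbit_normalCore_eq_orbit_zpowers_pow_period hK hKh hk₀ hk₀' hα,
    ← orbit_normalCore_smul_eq_orbit_zpowers_pow_period hK hKh hk₀ hk₀' hα,
    ← smul_orbit_eq_orbit_smul, Nat.card_coe_set_eq, Nat.card_coe_set_eq, Set.ncard_smul_set]

theorem smul_mem_orbit_zpowers_pow_period_of_notMem (hK : stabilizer G ω ≤ K)
    (hKh : (K : Set G) * (zpowers h : Set G) = Set.univ) (hk₀ : k₀ ∈ K)
    (hα : ∀ x : α, x ∈ orbit (zpowers h) ω ∨ x ∈ orbit (zpowers h) (k₀ • ω))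
    {k : G} (hk : k ∈ K) (hk' : k ∉ K.normalCore ⊔ stabilizer G ω) :
    k • ω ∈ orbit (zpowers (h ^ period h ((1 : G) : G ⧸ K))) (k₀ • ω) :=
  (orbit_subset_union_orbit_zpowers_pow_period hK hKh hk₀ hα ⟨⟨k, hk⟩, rfl⟩).resolve_left
    fun hkω ↦ hk' <| mem_normal_sup_stabilizer_iff.mpr <|
      orbit_subset_orbit_of_le (zpowers_pow_period_le_normalCore hKh) ω hkω

theorem relIndex_normalCore_sup_stabilizer_eq_two (hK : stabilizer G ω ≤ K)
    (hKh : (K : Set G) * (zpowers h : Set G) = Set.univ) (hk₀ : k₀ ∈ K)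
    (hk₀' : k₀ ∉ K.normalCore ⊔ stabilizer G ω)
    (hα : ∀ x : α, x ∈ orbit (zpowers h) ω ∨ x ∈ orbit (zpowers h) (k₀ • ω)) :
    (K.normalCore ⊔ stabilizer G ω).relIndex K = 2 := by
  refine relIndex_eq_two_iff_exists_notMem_and'.mpr
    ⟨k₀⁻¹, K.inv_mem hk₀, by rwa [inv_mem_iff], fun k hk ↦ or_iff_not_imp_right.mpr fun hk' ↦ ?_⟩
  have hkω := smul_mem_orbit_zpowers_pow_period_of_notMem hK hKh hk₀ hα hk hk'
  rw [← orbit_normalCore_smul_eq_orbit_zpowers_pow_period hK hKh hk₀ hk₀' hα,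
    ← smul_orbit_eq_orbit_smul, Set.mem_smul_set_iff_inv_smul_mem, smul_smul] at hkω
  exact mem_normal_sup_stabilizer_iff.mpr hkω

theorem normalCore_sup_stabilizer_mul_zpowers_ne_univ (hK : stabilizer G ω ≤ K)
    (hKh : (K : Set G) * (zpowers h : Set G) = Set.univ) (hk₀ : k₀ ∈ K)
    (hk₀' : k₀ ∉ K.normalCore ⊔ stabilizer G ω)
    (hα : ∀ x : α, x ∈ orbit (zpowers h) ω ∨ x ∈ orbit (zpowers h) (k₀ • ω)) :
    ((K.normalCore ⊔ stabilizer G ω : Subgroup G) : Set G) * (zpowers h : Set G) ≠ Set.univ := by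
  intro hK'h
  obtain ⟨l, hl, hk₀l⟩ := (mul_zpowers_eq_univ_iff le_sup_right h).mp hK'h k₀
  have hlω : l • ω ∈ orbit (zpowers h) ω := by
    have := mem_normal_sup_stabilizer_iff.mp hl
    rw [orbit_normalCore_eq_orbit_zpowers_pow_period hK hKh hk₀ hk₀' hα] at this
    exact orbit_subset_orbit_of_le (zpowers_le.mpr (pow_mem (mem_zpowers h) _)) ω this
  exact hk₀' <| mem_normalCore_sup_stabilizer_of_smul_mem_orbit hK hKh hk₀ <|
    orbit_eq_iff.mpr hlω ▸ hk₀l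

theorem le_normalCore_sup_stabilizer_of_mul_zpowers_ne_univ (hK : stabilizer G ω ≤ K)
    (hKh : (K : Set G) * (zpowers h : Set G) = Set.univ) (hk₀ : k₀ ∈ K)
    (hα : ∀ x : α, x ∈ orbit (zpowers h) ω ∨ x ∈ orbit (zpowers h) (k₀ • ω))
    {L : Subgroup G} (hL : stabilizer G ω ≤ L) (hLK : L ≤ K)
    (hLh : (L : Set G) * (zpowers h : Set G) ≠ Set.univ) :
    L ≤ K.normalCore ⊔ stabilizer G ω := by
  by_contra hLK'
  obtain ⟨l₀, hl₀, hl₀'⟩ := SetLike.not_le_iff_exists.mp hLK'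
  refine hLh ((mul_zpowers_eq_univ_iff hL h).mpr fun g ↦ ?_)
  rcases hα (g • ω) with hg | hg
  · exact ⟨1, L.one_mem, by rwa [one_smul]⟩
  · have hl₀ω := orbit_subset_orbit_of_le (zpowers_le.mpr (pow_mem (mem_zpowers h) _)) _
      (smul_mem_orbit_zpowers_pow_period_of_notMem hK hKh hk₀ hα (hLK hl₀) hl₀')
    exact ⟨l₀, hl₀, by rwa [orbit_eq_iff.mpr hl₀ω]⟩

end TwoOrbits

theorem H_transitive_not_core_complementary_general {G Ω : Type*} [Group G] [Fintype Ω]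
    [MulAction G Ω] (ω : Ω) (h : G) (a b : Ω) (n₁ n₂ : ℕ)
    (horb : ∀ x : Ω, x ∈ MulAction.orbit (Subgroup.zpowers h) a ∨
      x ∈ MulAction.orbit (Subgroup.zpowers h) b)
    (hn₁ : Nat.card (MulAction.orbit (Subgroup.zpowers h) a) = n₁)
    (hn₂ : Nat.card (MulAction.orbit (Subgroup.zpowers h) b) = n₂)
    (K : Subgroup G) (hK : MulAction.stabilizer G ω ≤ K)
    (hHtrans : (K : Set G) * (Subgroup.zpowers h : Set G) = (Set.univ : Set G))
    (hncc : ¬ IsCoreComplementary ω K) :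
    n₁ = n₂ ∧
    ∃ K' : Subgroup G, MulAction.stabilizer G ω ≤ K' ∧ K' ≤ K ∧
      K'.relIndex K = 2 ∧
      IsCoreComplementary ω K' ∧
      (K' : Set G) * (Subgroup.zpowers h : Set G) ≠ (Set.univ : Set G) ∧
      (∀ L : Subgroup G, MulAction.stabilizer G ω ≤ L → L ≤ K →
        (L : Set G) * (Subgroup.zpowers h : Set G) ≠ (Set.univ : Set G) → L ≤ K') := by
  obtain ⟨k₀, hk₀, hk₀'⟩ : ∃ k₀ ∈ K, k₀ ∉ K.normalCore ⊔ stabilizer G ω := by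
    by_contra! hle
    exact hncc <| le_antisymm hle (sup_le K.normalCore_le hK) ▸
      isCoreComplementary_normal_sup_stabilizer K.normalCore ω
  have hk₀ω : ω ∉ orbit (zpowers h) (k₀ • ω) := fun hω ↦
    hk₀' (mem_normalCore_sup_stabilizer_of_smul_mem_orbit hK hHtrans hk₀ (mem_orbit_symm.mp hω))
  have hsplit := orbits_eq_or_of_forall_mem_orbit_or horb hk₀ω
  have hα : ∀ x : Ω, x ∈ orbit (zpowers h) ω ∨ x ∈ orbit (zpowers h) (k₀ • ω) := by
    rcases hsplit with ⟨ha, hb⟩ | ⟨ha, hb⟩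
    · simpa only [ha, hb] using horb
    · simpa only [ha, hb, or_comm] using horb
  have hperiod := period_smul_eq_period hK hHtrans hk₀ hk₀' hα
  refine ⟨?_, _, le_sup_right, sup_le K.normalCore_le hK,
    relIndex_normalCore_sup_stabilizer_eq_two hK hHtrans hk₀ hk₀' hα,
    isCoreComplementary_normal_sup_stabilizer K.normalCore ω,
    normalCore_sup_stabilizer_mul_zpowers_ne_univ hK hHtrans hk₀ hk₀' hα,
    fun _ hL hLK hLh ↦
      le_normalCore_sup_stabilizer_of_mul_zpowers_ne_univ hK hHtrans hk₀ hα hL hLK hLh⟩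
  rcases hsplit with ⟨ha, hb⟩ | ⟨ha, hb⟩ <;>
    rw [← hn₁, ← hn₂, ha, hb, card_orbit_zpowers, card_orbit_zpowers, hperiod]

/-- Let `G` act faithfully and transitively on a finite set `Ω` with
point stabilizer `G_ω`, and let `h ∈ G` be such that `H = ⟨h⟩` has exactly two orbits on
`Ω`, of lengths `n₁` and `n₂`. If `K ∈ L(G_ω, G)` is `H`-transitive (`K·⟨h⟩ = G` as sets)
but not core-complementary, then `n₁ = n₂` and there is a subgroup `K' ∈ L(G_ω, G)` with
`K' ≤ K` of index `[K : K'] = 2` which is core-complementary and `H`-intransitive, and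
every `H`-intransitive `L ∈ L(G_ω, G)` with `L ≤ K` satisfies `L ≤ K'`. -/
theorem H_transitive_not_core_complementary {G Ω : Type*} [Group G] [Fintype Ω]
    [MulAction G Ω] [FaithfulSMul G Ω] (htrans : MulAction.IsPretransitive G Ω)
    (ω : Ω) (h : G) (a b : Ω) (n₁ n₂ : ℕ)
    (hab : MulAction.orbit (Subgroup.zpowers h) a ≠ MulAction.orbit (Subgroup.zpowers h) b)
    (horb : ∀ x : Ω, x ∈ MulAction.orbit (Subgroup.zpowers h) a ∨
      x ∈ MulAction.orbit (Subgroup.zpowers h) b)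
    (hn₁ : Nat.card (MulAction.orbit (Subgroup.zpowers h) a) = n₁)
    (hn₂ : Nat.card (MulAction.orbit (Subgroup.zpowers h) b) = n₂)
    (K : Subgroup G) (hK : MulAction.stabilizer G ω ≤ K)
    (hHtrans : (K : Set G) * (Subgroup.zpowers h : Set G) = (Set.univ : Set G))
    (hncc : ¬ IsCoreComplementary ω K) :
    n₁ = n₂ ∧
    ∃ K' : Subgroup G, MulAction.stabilizer G ω ≤ K' ∧ K' ≤ K ∧
      K'.relIndex K = 2 ∧
      IsCoreComplementary ω K' ∧
      (K' : Set G) * (Subgroup.zpowers h : Set G) ≠ (Set.univ : Set G) ∧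
      (∀ L : Subgroup G, MulAction.stabilizer G ω ≤ L → L ≤ K →
        (L : Set G) * (Subgroup.zpowers h : Set G) ≠ (Set.univ : Set G) → L ≤ K') :=
  H_transitive_not_core_complementary_general ω h a b n₁ n₂ horb hn₁ hn₂ K hK hHtrans hncc
end

section
/- Let G be a finite group and let A, B be non-permutable subgroups of G (i.e. AB ≠ BA as subsets of G). Then there exist non-permutable subgroups Â, B̂ of G with A ≤ Â and B ≤ B̂ such that core_G(Â) = core_G(B̂). -/
/-!
Take a pair `(Â, B̂)` above `(A, B)` that is maximal among non-permutable pairs. If `N` is a normal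
subgroup contained in `B̂`, then `(Â ⊔ N) B̂ = Â N B̂ = Â B̂` and `B̂ (Â ⊔ N) = B̂ N Â = B̂ Â`, so
`Â ⊔ N` still does not permute with `B̂`; maximality gives `N ≤ Â`. Taking `N = core(B̂)` yields
`core(B̂) ≤ core(Â)`, and the other inclusion is symmetric.
-/

open Pointwise

namespace Subgroup

variable {G : Type*} [Group G]

theorem coe_mul_comm_of_sup_normal_le {C D N : Subgroup G} [N.Normal] (hND : N ≤ D)
    (h : ((C ⊔ N : Subgroup G) : Set G) * D = D * (C ⊔ N : Subgroup G)) :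
    (C : Set G) * D = D * C := by
  have hN : ((N : Set G) * D) = D := by rw [← normal_mul, sup_eq_right.mpr hND]
  have hN' : ((D : Set G) * N) = D := by rw [← mul_normal, sup_eq_left.mpr hND]
  calc (C : Set G) * D = C * (N * D) := by rw [hN]
    _ = (C ⊔ N : Subgroup G) * D := by rw [mul_normal, mul_assoc]
    _ = D * (C ⊔ N : Subgroup G) := h
    _ = D * (N * C) := by rw [sup_comm, normal_mul]
    _ = D * C := by rw [← mul_assoc, hN']

theorem normalCore_le_normalCore_of_maximal {C D : Subgroup G}
    (hCD : (C : Set G) * D ≠ D * C)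
    (hmax : ∀ C' : Subgroup G, C ≤ C' → (C' : Set G) * D ≠ D * C' → C' ≤ C) :
    D.normalCore ≤ C.normalCore := by
  rw [normal_le_normalCore]
  have hsup : C ⊔ D.normalCore ≤ C :=
    hmax _ le_sup_left fun h ↦ hCD (coe_mul_comm_of_sup_normal_le D.normalCore_le h)
  exact le_sup_right.trans hsup

end Subgroup

/-- Let `A, B` be non-permutable subgroups of a finite group `G`
(`AB ≠ BA` as subsets). Then there exist non-permutable subgroups `Â, B̂` of `G` with
`A ≤ Â` and `B ≤ B̂` such that `core_G(Â) = core_G(B̂)`. -/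
theorem non_permutable_extend_to_equal_cores {G : Type*} [Group G] [Finite G]
    (A B : Subgroup G)
    (hnp : (A : Set G) * (B : Set G) ≠ (B : Set G) * (A : Set G)) :
    ∃ Ahat Bhat : Subgroup G, A ≤ Ahat ∧ B ≤ Bhat ∧
      (Ahat : Set G) * (Bhat : Set G) ≠ (Bhat : Set G) * (Ahat : Set G) ∧
      Ahat.normalCore = Bhat.normalCore := by
  obtain ⟨⟨Ahat, Bhat⟩, ⟨hA, hB⟩, hnp', hmax⟩ :=
    Finite.exists_le_maximal (p := fun p : Subgroup G × Subgroup G ↦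
      (p.1 : Set G) * p.2 ≠ p.2 * p.1) (a := (A, B)) hnp
  refine ⟨Ahat, Bhat, hA, hB, hnp', le_antisymm ?_ ?_⟩
  · exact Subgroup.normalCore_le_normalCore_of_maximal hnp'.symm fun D' hD' h ↦
      (hmax (y := (Ahat, D')) h.symm ⟨le_rfl, hD'⟩).2
  · exact Subgroup.normalCore_le_normalCore_of_maximal hnp' fun C' hC' h ↦
      (hmax (y := (C', Bhat)) h ⟨hC', le_rfl⟩).1
end
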